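/- arXiv:1303.2145 — 11 statements merged into one kernel-verified Lean document; each statement's English description precedes it below -/
import Mathlib

section
/- A sequence d = (d_1, ..., d_n) of nonnegative integers in decreasing order is the sequence of reduced degrees of the vertices of a graph-with-loops on n vertices if and only if d is bipartite graphic. -/
open Finset

namespace Stmt2Aux

variable {n : ℕ}

def rs (A : Fin n → Fin n → Bool) (i : Fin n) : ℕ := ∑ j, if A i j = true then 1 else 0
def cs (A : Fin n → Fin n → Bool) (j : Fin n) : ℕ := ∑ i, if A i j = true then 1 else 0

lemma rs_eq_card (A : Fin n → Fin n → Bool) (i : Fin n) :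
    (univ.filter (fun j => A i j = true)).card = rs A i := (Finset.card_filter _ _)

lemma cs_eq_card (A : Fin n → Fin n → Bool) (j : Fin n) :
    (univ.filter (fun i => A i j = true)).card = cs A j := (Finset.card_filter _ _)

/-- flip f to be false at a and true at b -/
def uflip (f : Fin n → Bool) (a b : Fin n) : Fin n → Bool :=
  Function.update (Function.update f a false) b true

lemma uflip_b (f : Fin n → Bool) (a b : Fin n) : uflip f a b b = true := by
  simp [uflip]

lemma uflip_a (f : Fin n → Bool) {a b : Fin n} (hab : a ≠ b) : uflip f a b a = false := by
  simp [uflip, Function.update_of_ne hab]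

lemma uflip_o (f : Fin n → Bool) {a b j : Fin n} (hja : j ≠ a) (hjb : j ≠ b) :
    uflip f a b j = f j := by
  simp [uflip, Function.update_of_ne hja, Function.update_of_ne hjb]

lemma sum_flip {f : Fin n → Bool} {a b : Fin n} (hab : a ≠ b) (ha : f a = true) (hb : f b = false) :
    (∑ j, if uflip f a b j = true then 1 else 0)
      = ∑ j, if f j = true then 1 else 0 := by
  have hmemb : b ∈ (univ : Finset (Fin n)) := mem_univ b
  have hmema : a ∈ (univ : Finset (Fin n)) \ {b} := by
    simp [Finset.mem_sdiff, hab]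
  have hfun : (fun j => if uflip f a b j = true then 1 else 0)
      = Function.update (Function.update (fun j => if f j = true then (1:ℕ) else 0) a 0) b 1 := by
    funext j
    by_cases hjb : j = b
    · subst hjb; simp [uflip_b]
    · by_cases hja : j = a
      · subst hja
        rw [uflip_a f hab, Function.update_of_ne hjb, Function.update_self]
        simp
      · rw [uflip_o f hja hjb, Function.update_of_ne hjb, Function.update_of_ne hja]
  rw [hfun]
  rw [Finset.sum_update_of_mem hmemb, Finset.sum_update_of_mem hmema]
  conv_rhs => rw [Finset.sum_eq_sum_sdiff_singleton_add hmemb]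
  rw [Finset.sum_eq_sum_sdiff_singleton_add hmema]
  simp [ha, hb]
  omega

lemma switch (A : Fin n → Fin n → Bool) {i0 r a b : Fin n}
    (hir : i0 ≠ r) (hab : a ≠ b)
    (h1 : A i0 a = true) (h2 : A i0 b = false) (h3 : A r a = false) (h4 : A r b = true) :
    ∃ A' : Fin n → Fin n → Bool,
      (∀ i, rs A' i = rs A i) ∧ (∀ j, cs A' j = cs A j) ∧
      (A' i0 = uflip (A i0) a b) ∧
      (∀ i j, j ≠ a → j ≠ b → A' i j = A i j) := by
  classical
  set A' : Fin n → Fin n → Bool := fun i =>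
    if i = i0 then uflip (A i0) a b
    else if i = r then uflip (A r) b a
    else A i with hA'
  have hrow0 : A' i0 = uflip (A i0) a b := by simp [hA']
  have hrowr : A' r = uflip (A r) b a := by simp [hA', hir.symm]
  have hrowo : ∀ i, i ≠ i0 → i ≠ r → A' i = A i := by
    intro i h1 h2; simp [hA', h1, h2]
  have hcola : (fun i => A' i a) = uflip (fun i => A i a) i0 r := by
    funext i
    by_cases hi : i = i0
    · subst hi
      rw [hrow0, uflip_a _ hab, uflip_a _ hir]
    · by_cases hir2 : i = r
      · subst hir2
        rw [hrowr, uflip_b, uflip_b]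
      · rw [hrowo i hi hir2, uflip_o _ hi hir2]
  have hcolb : (fun i => A' i b) = uflip (fun i => A i b) r i0 := by
    funext i
    by_cases hi : i = i0
    · subst hi
      rw [hrow0, uflip_b, uflip_b]
    · by_cases hir2 : i = r
      · subst hir2
        rw [hrowr, uflip_a _ hab.symm, uflip_a _ (Ne.symm hir)]
      · rw [hrowo i hi hir2, uflip_o _ hir2 hi]
  refine ⟨A', ?_, ?_, hrow0, ?_⟩
  · intro i
    by_cases hi : i = i0
    · subst hi; rw [rs, rs, hrow0]
      exact sum_flip hab h1 h2
    · by_cases hir2 : i = r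
      · subst hir2; rw [rs, rs, hrowr]
        exact sum_flip hab.symm h4 h3
      · rw [rs, rs, hrowo i hi hir2]
  · intro j
    by_cases hja : j = a
    · subst hja
      rw [cs, cs]
      calc (∑ i, if A' i j = true then 1 else 0)
          = ∑ i, if uflip (fun i => A i j) i0 r i = true then 1 else 0 :=
            Finset.sum_congr rfl (fun i _ => by rw [congrFun hcola i])
        _ = ∑ i, if A i j = true then 1 else 0 := sum_flip hir h1 h3
    · by_cases hjb : j = b
      · subst hjb
        rw [cs, cs]
        calc (∑ i, if A' i j = true then 1 else 0)
            = ∑ i, if uflip (fun i => A i j) r i0 i = true then 1 else 0 :=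
              Finset.sum_congr rfl (fun i _ => by rw [congrFun hcolb i])
          _ = ∑ i, if A i j = true then 1 else 0 := sum_flip (Ne.symm hir) h4 h2
      · rw [cs, cs]
        apply Finset.sum_congr rfl
        intro i _
        by_cases hi : i = i0
        · subst hi; rw [hrow0, uflip_o _ hja hjb]
        · by_cases hir2 : i = r
          · subst hir2; rw [hrowr, uflip_o _ hjb hja]
          · rw [hrowo i hi hir2]
  · intro i j hja hjb
    by_cases hi : i = i0
    · subst hi; rw [hrow0, uflip_o _ hja hjb]
    · by_cases hir2 : i = r
      · subst hir2; rw [hrowr, uflip_o _ hjb hja]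
      · rw [hrowo i hi hir2]

lemma exists_r (A : Fin n → Fin n → Bool) {i0 a b : Fin n}
    (hcs : cs A a ≤ cs A b) (h1 : A i0 a = true) (h2 : A i0 b = false) :
    ∃ r, i0 ≠ r ∧ A r a = false ∧ A r b = true := by
  classical
  by_contra hc
  push_neg at hc
  have hsub : univ.filter (fun i => A i b = true) ⊆ (univ.filter (fun i => A i a = true)).erase i0 := by
    intro i hi
    simp only [mem_filter, mem_univ, true_and] at hi
    have hne : i0 ≠ i := by rintro rfl; rw [hi] at h2; exact absurd h2 (by simp)
    rcases Bool.eq_false_or_eq_true (A i a) with hfa | hta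
    · exact mem_erase.mpr ⟨hne.symm, by simp [hfa]⟩
    · exact absurd hi (hc i hne hta)
  have h1m : i0 ∈ univ.filter (fun i => A i a = true) := by simp [h1]
  have hcard := Finset.card_le_card hsub
  rw [Finset.card_erase_of_mem h1m] at hcard
  have hbc : cs A b = (univ.filter (fun i => A i b = true)).card := (Finset.card_filter _ _).symm
  have hac : cs A a = (univ.filter (fun i => A i a = true)).card := (Finset.card_filter _ _).symm
  have hpos : 0 < (univ.filter (fun i => A i a = true)).card := Finset.card_pos.mpr ⟨i0, h1m⟩
  omega


lemma card_val_lt (N a : ℕ) (h : a ≤ N) :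
    (univ.filter (fun j : Fin N => j.val < a)).card = a := by
  rcases Nat.eq_zero_or_pos N with hN | hN
  · have ha0 : a = 0 := by omega
    subst ha0
    simp
  conv_rhs => rw [← Finset.card_range a]
  apply Finset.card_nbij' (fun j : Fin N => j.val) (fun i => (⟨i % N, Nat.mod_lt _ hN⟩ : Fin N))
  · intro j hj
    simp only [Finset.mem_coe, Finset.mem_filter, mem_univ, true_and] at hj
    exact Finset.mem_range.mpr hj
  · intro i hi
    simp only [Finset.mem_coe, Finset.mem_range] at hi
    simp only [Finset.mem_coe, Finset.mem_filter, mem_univ, true_and]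
    rw [Nat.mod_eq_of_lt (by omega)]
    omega
  · intro j hj
    simp only [Finset.mem_coe, Finset.mem_filter, mem_univ, true_and] at hj
    simp [Fin.ext_iff, Nat.mod_eq_of_lt j.isLt]
  · intro i hi
    simp only [Finset.mem_coe, Finset.mem_range] at hi
    simp [Nat.mod_eq_of_lt (by omega : i < N)]

lemma card_val_ico (N c b : ℕ) (hb : b ≤ N) (hcb : c ≤ b) :
    (univ.filter (fun j : Fin N => c ≤ j.val ∧ j.val < b)).card = b - c := by
  rcases Nat.eq_zero_or_pos N with hN | hN
  · have : b = 0 := by omega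
    subst this
    have hc0 : c = 0 := by omega
    subst hc0
    simp
  conv_rhs => rw [← Nat.card_Ico c b]
  apply Finset.card_nbij' (fun j : Fin N => j.val) (fun i => (⟨i % N, Nat.mod_lt _ hN⟩ : Fin N))
  · intro j hj
    simp only [Finset.mem_coe, Finset.mem_filter, mem_univ, true_and] at hj
    exact Finset.mem_Ico.mpr hj
  · intro i hi
    simp only [Finset.mem_coe, Finset.mem_Ico] at hi
    simp only [Finset.mem_coe, Finset.mem_filter, mem_univ, true_and]
    rw [Nat.mod_eq_of_lt (by omega)]
    omega
  · intro j hj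
    simp [Fin.ext_iff, Nat.mod_eq_of_lt j.isLt]
  · intro i hi
    simp only [Finset.mem_coe, Finset.mem_Ico] at hi
    simp [Nat.mod_eq_of_lt (by omega : i < N)]

lemma dc {N : ℕ} (T : Finset (Fin N)) (h : ∀ j ∈ T, ∀ k, k ≤ j → k ∈ T) (j : Fin N) :
    j ∈ T ↔ j.val < T.card := by
  constructor
  · intro hj
    have hsub : univ.filter (fun k : Fin N => k.val < j.val + 1) ⊆ T := by
      intro k hk
      simp only [Finset.mem_filter, mem_univ, true_and] at hk
      exact h j hj k (Fin.le_def.mpr (by omega))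
    have := Finset.card_le_card hsub
    rw [card_val_lt N (j.val+1) (by omega)] at this
    omega
  · intro hj
    by_contra hjT
    have hsub : T ⊆ univ.filter (fun k : Fin N => k.val < j.val) := by
      intro k hk
      simp only [Finset.mem_filter, mem_univ, true_and]
      by_contra hlt
      push_neg at hlt
      exact hjT (h k hk j (Fin.le_def.mpr hlt))
    have := Finset.card_le_card hsub
    rw [card_val_lt N j.val (by omega)] at this
    omega

lemma exists_W {N : ℕ} (e : Fin N → ℕ) (he : Antitone e) (t : ℕ) (ht : t ≤ N) :
    ∃ W : Finset (Fin N), W.card = t ∧ (∀ a ∉ W, ∀ b ∈ W, e a ≤ e b) ∧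
      (∀ i j : Fin N, i ≤ j → e i = e j → i ∈ W → j ∈ W) := by
  classical
  rcases Nat.eq_zero_or_pos t with h0 | hpos
  · exact ⟨∅, by simp [h0], by simp, by simp⟩
  have htN : t - 1 < N := by omega
  set p : Fin N := ⟨t-1, htN⟩ with hp
  set v := e p with hv
  set Tgt := univ.filter (fun j => v < e j) with hTgt
  set Tge := univ.filter (fun j => v ≤ e j) with hTge
  have hdc1 : ∀ j ∈ Tgt, ∀ k, k ≤ j → k ∈ Tgt := by
    intro j hj k hk
    simp only [hTgt, Finset.mem_filter, mem_univ, true_and] at hj ⊢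
    exact lt_of_lt_of_le hj (he hk)
  have hdc2 : ∀ j ∈ Tge, ∀ k, k ≤ j → k ∈ Tge := by
    intro j hj k hk
    simp only [hTge, Finset.mem_filter, mem_univ, true_and] at hj ⊢
    exact le_trans hj (he hk)
  set a := Tgt.card with ha
  set g := Tge.card with hg
  have m1 : ∀ j, j ∈ Tgt ↔ j.val < a := dc Tgt hdc1
  have m2 : ∀ j, j ∈ Tge ↔ j.val < g := dc Tge hdc2
  -- value facts
  have f1 : ∀ j : Fin N, (v < e j ↔ j.val < a) := by
    intro j; rw [← m1 j]; simp [hTgt]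
  have f2 : ∀ j : Fin N, (v ≤ e j ↔ j.val < g) := by
    intro j; rw [← m2 j]; simp [hTge]
  have hag : a ≤ g := Finset.card_le_card (by
    intro j hj
    simp only [hTgt, hTge, Finset.mem_filter, mem_univ, true_and] at hj ⊢
    omega)
  have hta : a ≤ t - 1 := by
    by_contra hc
    push_neg at hc
    have : v < e p := (f1 p).mpr (by simp [hp]; omega)
    omega
  have htg : t ≤ g := by
    have : v ≤ e p := le_refl v
    have := (f2 p).mp this
    simp [hp] at this
    omega
  have hgN : g ≤ N := by
    have := Finset.card_le_univ Tge
    simpa using this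
  set W := univ.filter (fun j : Fin N => j.val < a ∨ (g - (t - a) ≤ j.val ∧ j.val < g)) with hW
  have hWcard : W.card = t := by
    rw [hW]
    rw [Finset.filter_or]
    rw [Finset.card_union_of_disjoint]
    · rw [card_val_lt N a (by omega), card_val_ico N (g - (t-a)) g hgN (by omega)]
      omega
    · rw [Finset.disjoint_filter]
      intro j _ hj hj2
      omega
  refine ⟨W, hWcard, ?_, ?_⟩
  · intro x hx b hb
    simp only [hW, Finset.mem_filter, mem_univ, true_and] at hx hb
    push_neg at hx
    have hex : e x ≤ v := by
      have := (f1 x); omega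
    have heb : v ≤ e b := by
      rcases hb with hb | hb
      · have := (f1 b).mpr hb; omega
      · exact (f2 b).mpr (by omega)
    omega
  · intro i j hij heq hi
    simp only [hW, Finset.mem_filter, mem_univ, true_and] at hi ⊢
    have hvij : i.val ≤ j.val := Fin.le_def.mp hij
    rcases hi with hi | hi
    · left
      have : v < e i := (f1 i).mpr hi
      rw [heq] at this
      exact (f1 j).mp this
    · right
      have hei : e i ≤ v := by have := f1 i; omega
      have hej : v ≤ e j := by rw [← heq]; exact (f2 i).mpr (by omega)
      have : j.val < g := (f2 j).mp hej
      omega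

lemma chain (d : Fin n → ℕ) (U : Finset (Fin n)) (i0 : Fin n)
    (hP : ∀ a ∉ U, ∀ b ∈ U, d a ≤ d b) :
    ∀ (k : ℕ) (A : Fin n → Fin n → Bool),
      ((univ.filter (fun j => A i0 j = true)) \ U).card ≤ k →
      (∀ j, cs A j = d j) → rs A i0 = U.card →
      ∃ A', (∀ i, rs A' i = rs A i) ∧ (∀ j, cs A' j = d j) ∧
        (∀ j, A' i0 j = true ↔ j ∈ U) ∧
        (∀ i j, j ∈ U → A i0 j = true → A' i j = A i j) := by
  intro k
  induction k with
  | zero =>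
    intro A hk hcs hrs
    have hempty : (univ.filter (fun j => A i0 j = true)) \ U = ∅ := by
      rw [← Finset.card_eq_zero]; omega
    have hsub : univ.filter (fun j => A i0 j = true) ⊆ U := by
      intro j hj
      by_contra hjU
      have : j ∈ (univ.filter (fun j => A i0 j = true)) \ U := Finset.mem_sdiff.mpr ⟨hj, hjU⟩
      rw [hempty] at this; exact absurd this (Finset.notMem_empty j)
    have hcard : U.card ≤ (univ.filter (fun j => A i0 j = true)).card := by
      rw [rs_eq_card, hrs]
    have heq : univ.filter (fun j => A i0 j = true) = U := Finset.eq_of_subset_of_card_le hsub hcard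
    refine ⟨A, fun _ => rfl, hcs, ?_, fun _ _ _ _ => rfl⟩
    intro j
    rw [← heq]; simp
  | succ k ih =>
    intro A hk hcs hrs
    by_cases hk0 : ((univ.filter (fun j => A i0 j = true)) \ U).card ≤ k
    · exact ih A hk0 hcs hrs
    · set supp := univ.filter (fun j => A i0 j = true) with hsupp
      have hne : (supp \ U).Nonempty := by
        rw [← Finset.card_pos]; omega
      obtain ⟨a, ha⟩ := hne
      rw [Finset.mem_sdiff] at ha
      obtain ⟨haS, haU⟩ := ha
      have haA : A i0 a = true := (Finset.mem_filter.mp haS).2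
      -- find b ∈ U \ supp
      have hbne : (U \ supp).Nonempty := by
        by_contra hb
        rw [Finset.not_nonempty_iff_eq_empty, Finset.sdiff_eq_empty_iff_subset] at hb
        have hcard : supp.card = U.card := by rw [hsupp, rs_eq_card, hrs]
        have : U = supp := Finset.eq_of_subset_of_card_le hb (le_of_eq hcard)
        exact haU (by rw [this]; exact haS)
      obtain ⟨b, hb⟩ := hbne
      rw [Finset.mem_sdiff] at hb
      obtain ⟨hbU, hbS⟩ := hb
      have hbA : A i0 b = false := by
        rcases Bool.eq_false_or_eq_true (A i0 b) with h | h
        · exact absurd (Finset.mem_filter.mpr ⟨mem_univ b, h⟩) hbS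
        · exact h
      have hab : a ≠ b := fun h => haU (h ▸ hbU)
      have hdab : cs A a ≤ cs A b := by
        rw [hcs, hcs]; exact hP a haU b hbU
      obtain ⟨r, hir, h3, h4⟩ := exists_r A hdab haA hbA
      obtain ⟨A', hrows, hcols, hrow0, hoth⟩ := switch A hir hab haA hbA h3 h4
      -- new supp
      have hsupp' : univ.filter (fun j => A' i0 j = true) = insert b (supp.erase a) := by
        ext j
        simp only [Finset.mem_filter, mem_univ, true_and, Finset.mem_insert, Finset.mem_erase]
        by_cases hjb : j = b
        · subst hjb; rw [hrow0, uflip_b]; simp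
        · by_cases hja : j = a
          · subst hja; rw [hrow0, uflip_a _ hab]
            simp [hjb]
          · rw [hrow0, uflip_o _ hja hjb]
            simp [hsupp, hja, hjb]
      have hsdiff : (univ.filter (fun j => A' i0 j = true)) \ U = (supp \ U).erase a := by
        rw [hsupp']
        ext j
        simp only [Finset.mem_sdiff, Finset.mem_insert, Finset.mem_erase]
        constructor
        · rintro ⟨hj1 | hj1, hj2⟩
          · subst hj1; exact absurd hbU hj2
          · exact ⟨hj1.1, hj1.2, hj2⟩
        · rintro ⟨hja, hjs, hjU⟩
          exact ⟨Or.inr ⟨hja, hjs⟩, hjU⟩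
      have hkk : ((univ.filter (fun j => A' i0 j = true)) \ U).card ≤ k := by
        rw [hsdiff, Finset.card_erase_of_mem (Finset.mem_sdiff.mpr ⟨haS, haU⟩)]
        omega
      have hcs' : ∀ j, cs A' j = d j := fun j => by rw [hcols, hcs]
      have hrs' : rs A' i0 = U.card := by rw [hrows, hrs]
      obtain ⟨A'', h1, h2, h3', h4'⟩ := ih A' hkk hcs' hrs'
      refine ⟨A'', fun i => by rw [h1, hrows], fun j => h2 j, h3', ?_⟩
      intro i j hjU hjA
      have hja : j ≠ a := fun h => haU (h ▸ hjU)
      have hjb : j ≠ b := fun h => by rw [h, hbA] at hjA; exact absurd hjA (by simp)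
      have e1 : A' i j = A i j := hoth i j hja hjb
      have e2 : A' i0 j = true := by rw [hoth i0 j hja hjb]; exact hjA
      rw [h4' i j hjU e2, e1]

lemma key : ∀ (n : ℕ) (d : Fin n → ℕ), Antitone d →
    (∃ A : Fin n → Fin n → Bool, (∀ i, rs A i = d i) ∧ (∀ j, cs A j = d j)) →
    ∃ adj : Fin n → Fin n → Bool, (∀ v w, adj v w = adj w v) ∧ (∀ v, rs adj v = d v) := by
  intro n
  induction n with
  | zero =>
    intro d _ _
    exact ⟨fun _ _ => false, fun v _ => rfl, fun v => v.elim0⟩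
  | succ n ih =>
    rintro d hd ⟨A, hA1, hA2⟩
    by_cases hm : d 0 = 0
    · refine ⟨fun _ _ => false, fun _ _ => rfl, ?_⟩
      intro v
      have hv : d v ≤ d 0 := hd (Fin.zero_le v)
      have : d v = 0 := by omega
      rw [this, rs]
      simp
    -- d 0 ≥ 1
    have hm1 : 1 ≤ d 0 := by omega
    have hmn : d 0 ≤ n + 1 := by
      rw [← hA1 0, rs]
      calc (∑ j, if A 0 j = true then 1 else 0) ≤ ∑ _j : Fin (n+1), 1 :=
            Finset.sum_le_sum (fun j _ => by split <;> omega)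
        _ = n + 1 := by simp
    obtain ⟨W, hWcard, hWP, hWtie⟩ := exists_W (fun i : Fin n => d i.succ)
      (fun i j hij => hd (Fin.succ_le_succ_iff.mpr hij)) (d 0 - 1) (by omega)
    set U : Finset (Fin (n+1)) := insert 0 (W.map ⟨Fin.succ, Fin.succ_injective n⟩) with hU
    have h0U : (0 : Fin (n+1)) ∈ U := Finset.mem_insert_self _ _
    have hmemU : ∀ i : Fin n, (i.succ ∈ U ↔ i ∈ W) := by
      intro i
      rw [hU, Finset.mem_insert]
      constructor
      · rintro (h | h)
        · exact absurd h (Fin.succ_ne_zero i)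
        · obtain ⟨j, hj, hji⟩ := Finset.mem_map.mp h
          have : j = i := Fin.succ_injective n hji
          rwa [← this]
      · intro h
        exact Or.inr (Finset.mem_map.mpr ⟨i, h, rfl⟩)
    have hUcard : U.card = d 0 := by
      rw [hU, Finset.card_insert_of_notMem, Finset.card_map, hWcard]
      · omega
      · intro hmem
        obtain ⟨j, _, hj⟩ := Finset.mem_map.mp hmem
        exact Fin.succ_ne_zero j hj
    have hPU : ∀ a ∉ U, ∀ b ∈ U, d a ≤ d b := by
      intro x hx b hb
      have hxne : x ≠ 0 := fun h => hx (h ▸ h0U)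
      obtain ⟨x', rfl⟩ := Fin.eq_succ_of_ne_zero hxne
      have hx' : x' ∉ W := fun h => hx ((hmemU x').mpr h)
      rw [hU, Finset.mem_insert] at hb
      rcases hb with rfl | hb
      · exact hd (Fin.zero_le _)
      · obtain ⟨b', hb', rfl⟩ := Finset.mem_map.mp hb
        exact hWP x' hx' b' hb'
    -- first chain on rows
    obtain ⟨A1, h1rows, h1cols, h1row0, _⟩ := chain d U 0 hPU
      ((univ.filter (fun j => A 0 j = true)) \ U).card A le_rfl hA2 (by rw [hA1 0, hUcard])
    have h1rows' : ∀ i, rs A1 i = d i := fun i => by rw [h1rows, hA1]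
    -- transpose
    set B : Fin (n+1) → Fin (n+1) → Bool := fun i j => A1 j i with hB
    have hBcs : ∀ j, cs B j = d j := fun j => h1rows' j
    have hBrs : ∀ i, rs B i = cs A1 i := fun i => rfl
    obtain ⟨B1, h2rows, h2cols, h2row0, h2pres⟩ := chain d U 0 hPU
      ((univ.filter (fun j => B 0 j = true)) \ U).card B le_rfl hBcs
      (by rw [hBrs 0, h1cols 0, hUcard])
    have hB00 : B 0 0 = true := by
      rw [hB]
      exact (h1row0 0).mpr h0U
    have hcol0 : ∀ i, B1 i 0 = B i 0 := fun i => h2pres i 0 h0U hB00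
    set C : Fin (n+1) → Fin (n+1) → Bool := fun i j => B1 j i with hC
    have hCr : ∀ i, rs C i = d i := fun i => by
      have : rs C i = cs B1 i := rfl
      rw [this, h2cols]
    have hCc : ∀ j, cs C j = d j := fun j => by
      have : cs C j = rs B1 j := rfl
      rw [this, h2rows, hBrs, h1cols]
    have hCrow0 : ∀ j, (C 0 j = true ↔ j ∈ U) := by
      intro j
      have : C 0 j = A1 0 j := by rw [hC]; exact (hcol0 j).trans rfl
      rw [this]
      exact h1row0 j
    have hCcol0 : ∀ j, (C j 0 = true ↔ j ∈ U) := by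
      intro j
      exact h2row0 j
    -- restrict
    set D : Fin n → Fin n → Bool := fun i j => C i.succ j.succ with hD
    set d' : Fin n → ℕ := fun i => if i ∈ W then d i.succ - 1 else d i.succ with hd'
    have hDr : ∀ i, rs D i = d' i := by
      intro i
      have hsplit : d i.succ = (if C i.succ 0 = true then 1 else 0) + rs D i := by
        rw [← hCr i.succ, rs, Fin.sum_univ_succ]
        rfl
      by_cases hiW : i ∈ W
      · have : C i.succ 0 = true := (hCcol0 i.succ).mpr ((hmemU i).mpr hiW)
        rw [this] at hsplit
        simp only [hd', hiW, if_true, if_pos rfl] at *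
        omega
      · have : C i.succ 0 = false := by
          rcases Bool.eq_false_or_eq_true (C i.succ 0) with h | h
          · exact absurd ((hmemU i).mp ((hCcol0 i.succ).mp h)) hiW
          · exact h
        rw [this] at hsplit
        simp only [hd', hiW, if_false, Bool.false_eq_true] at *
        omega
    have hDc : ∀ j, cs D j = d' j := by
      intro j
      have hsplit : d j.succ = (if C 0 j.succ = true then 1 else 0) + cs D j := by
        rw [← hCc j.succ, cs, Fin.sum_univ_succ]
        rfl
      by_cases hjW : j ∈ W
      · have : C 0 j.succ = true := (hCrow0 j.succ).mpr ((hmemU j).mpr hjW)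
        rw [this] at hsplit
        simp only [hd', hjW, if_true, if_pos rfl] at *
        omega
      · have : C 0 j.succ = false := by
          rcases Bool.eq_false_or_eq_true (C 0 j.succ) with h | h
          · exact absurd ((hmemU j).mp ((hCrow0 j.succ).mp h)) hjW
          · exact h
        rw [this] at hsplit
        simp only [hd', hjW, if_false, Bool.false_eq_true] at *
        omega
    have hd'anti : Antitone d' := by
      intro i j hij
      have he : d j.succ ≤ d i.succ := hd (Fin.succ_le_succ_iff.mpr hij)
      by_cases hiW : i ∈ W
      · by_cases hjW : j ∈ W
        · simp only [hd', hiW, hjW, if_true]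
          omega
        · have hne : d i.succ ≠ d j.succ := by
            intro h
            exact hjW (hWtie i j hij h hiW)
          simp only [hd', hiW, hjW, if_true, if_false]
          omega
      · by_cases hjW : j ∈ W
        · simp only [hd', hiW, hjW, if_false, if_true]
          omega
        · simp only [hd', hiW, hjW, if_false]
          omega
    obtain ⟨adj', hsym', hdeg'⟩ := ih d' hd'anti ⟨D, hDr, hDc⟩
    -- extend
    classical
    set adj : Fin (n+1) → Fin (n+1) → Bool := fun v =>
      Fin.cases (fun w => decide (w ∈ U))
        (fun v' => Fin.cases (decide (v'.succ ∈ U)) (fun w' => adj' v' w')) v with hadj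
    have hadj0 : ∀ w, adj 0 w = decide (w ∈ U) := fun w => by
      simp only [hadj, Fin.cases_zero]
    have hadjs0 : ∀ v' : Fin n, adj v'.succ 0 = decide (v'.succ ∈ U) := fun v' => by
      simp only [hadj, Fin.cases_succ, Fin.cases_zero]
    have hadjss : ∀ (v' w' : Fin n), adj v'.succ w'.succ = adj' v' w' := fun v' w' => by
      simp only [hadj, Fin.cases_succ]
    refine ⟨adj, ?_, ?_⟩
    · intro v w
      induction v using Fin.cases with
      | zero =>
        induction w using Fin.cases with
        | zero => rfl
        | succ w' => rw [hadj0, hadjs0]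
      | succ v' =>
        induction w using Fin.cases with
        | zero => rw [hadj0, hadjs0]
        | succ w' => rw [hadjss, hadjss, hsym']
    · intro v
      induction v using Fin.cases with
      | zero =>
        rw [rs]
        have : ∀ j : Fin (n+1), (if adj 0 j = true then (1:ℕ) else 0) = if j ∈ U then 1 else 0 := by
          intro j
          rw [hadj0]
          by_cases h : j ∈ U <;> simp [h]
        rw [Finset.sum_congr rfl (fun j _ => this j)]
        rw [Finset.sum_ite_mem, Finset.univ_inter, Finset.sum_const, smul_eq_mul, mul_one, hUcard]
      | succ v' =>
        rw [rs, Fin.sum_univ_succ]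
        have e1 : (if adj v'.succ 0 = true then (1:ℕ) else 0) = if C v'.succ 0 = true then 1 else 0 := by
          rw [hadjs0]
          by_cases h : v'.succ ∈ U
          · rw [(hCcol0 v'.succ).mpr h]; simp [h]
          · have : C v'.succ 0 = false := by
              rcases Bool.eq_false_or_eq_true (C v'.succ 0) with h2 | h2
              · exact absurd ((hCcol0 v'.succ).mp h2) h
              · exact h2
            rw [this]; simp [h]
        have e2 : (∑ w' : Fin n, if adj v'.succ w'.succ = true then (1:ℕ) else 0) = rs D v' := by
          have h : (∑ w' : Fin n, if adj v'.succ w'.succ = true then (1:ℕ) else 0) = rs adj' v' := by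
            rw [rs]
            exact Finset.sum_congr rfl (fun w' _ => by rw [hadjss])
          rw [h, hdeg' v', ← hDr v']
        rw [e1, e2]
        have hsplit : d v'.succ = (if C v'.succ 0 = true then 1 else 0) + rs D v' := by
          rw [← hCr v'.succ, rs, Fin.sum_univ_succ]
          rfl
        omega

end Stmt2Aux

open Stmt2Aux in
/-- A decreasing sequence of nonnegative integers is the reduced degree sequence
of a graph-with-loops iff it is bipartite graphic, i.e. `(d, d)` is realized as
the degree sequences of the two parts of a bipartite simple graph (equivalently,
there is a 0-1 matrix whose `i`-th row sum and `i`-th column sum are both `d i`). -/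
theorem stmt_2 (n : ℕ) (d : Fin n → ℕ) (hd : Antitone d) :
    (∃ adj : Fin n → Fin n → Bool,
      (∀ v w, adj v w = adj w v) ∧
      (∀ v, (univ.filter (fun w => adj v w = true)).card = d v))
    ↔ (∃ A : Fin n → Fin n → Bool,
        (∀ i, (univ.filter (fun j => A i j = true)).card = d i) ∧
        (∀ j, (univ.filter (fun i => A i j = true)).card = d j)) := by
  constructor
  · rintro ⟨adj, hsym, hdeg⟩
    refine ⟨adj, hdeg, ?_⟩
    intro j
    have hset : (univ.filter (fun i => adj i j = true)) = (univ.filter (fun i => adj j i = true)) := by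
      apply Finset.filter_congr
      intro i _
      rw [hsym i j]
    rw [hset]
    exact hdeg j
  · rintro ⟨A, hrows, hcols⟩
    have hrows' : ∀ i, rs A i = d i := fun i => by rw [← rs_eq_card, hrows]
    have hcols' : ∀ j, cs A j = d j := fun j => by rw [← cs_eq_card, hcols]
    obtain ⟨adj, hsym, hdeg⟩ := key n d hd ⟨A, hrows', hcols'⟩
    refine ⟨adj, hsym, ?_⟩
    intro v
    rw [rs_eq_card, hdeg]
end

section
/- A sequence d = (d_1, ..., d_n) of nonnegative integers in decreasing order is bipartite graphic if and only if, for each integer k with 1 ≤ k ≤ n, ∑_{i=1}^k d_i ≤ k^2 + ∑_{i=k+1}^n min{k, d_i}. -/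
/-!
Necessity is double counting: the ones of a realizing 0-1 matrix in the first `k` rows lie in a
`k × k` block, plus at most `min k d_j` in each later column `j`.

For sufficiency, the Ferrers matrix (row `i` filled in its first `d_i` columns) realizes `d`
against the conjugate sequence `d*`, whose prefix sums are `∑_i min(d_i, k)`. The `k²`-criterion
implies `∑_{i<k} d_i ≤ ∑_i min(d_i, k)`, i.e. `d*` dominates `d`. Moving a one of some row from a
column `p` to a later column `q` with fewer ones keeps the row sums and moves a unit of column sum
from `p` to `q`; choosing `p < q` well keeps the dominance and strictly decreases the sum of the
prefix sums, so finitely many such moves reach `d`.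
-/

open Finset

def IsBigraphic {ι κ : Type*} [Fintype ι] [Fintype κ] (r : ι → ℕ) (c : κ → ℕ) : Prop :=
  ∃ A : ι → κ → Bool, (∀ i, #{j | A i j} = r i) ∧ ∀ j, #{i | A i j} = c j

def prefixSum {m : ℕ} (f : Fin m → ℕ) (k : ℕ) : ℕ :=
  ∑ i ∈ univ.filter (fun i : Fin m => (i : ℕ) < k), f i

section prefixSum

variable {m : ℕ}

theorem prefixSum_of_le (f : Fin m → ℕ) {k : ℕ} (hk : m ≤ k) : prefixSum f k = ∑ i, f i := by
  unfold prefixSum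
  rw [filter_true_of_mem fun i _ => i.isLt.trans_le hk]

theorem prefixSum_add (f g : Fin m → ℕ) (k : ℕ) :
    prefixSum (f + g) k = prefixSum f k + prefixSum g k :=
  sum_add_distrib

theorem prefixSum_single (p : Fin m) (k : ℕ) :
    prefixSum (Pi.single p 1) k = if (p : ℕ) < k then 1 else 0 := by
  simp [prefixSum, sum_pi_single']

end prefixSum

namespace IsBigraphic

variable {ι κ : Type*} [Fintype ι] [Fintype κ] {r : ι → ℕ} {c : κ → ℕ}

theorem sum_le_sum_min (h : IsBigraphic r c) (s : Finset ι) :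
    ∑ i ∈ s, r i ≤ ∑ j, min #s (c j) := by
  obtain ⟨A, hr, hc⟩ := h
  calc ∑ i ∈ s, r i = ∑ i ∈ s, #{j | A i j} := sum_congr rfl fun i _ => (hr i).symm
    _ = ∑ j, #{i ∈ s | A i j} := sum_card_bipartiteAbove_eq_sum_card_bipartiteBelow _
    _ ≤ ∑ j, min #s (c j) := sum_le_sum fun j _ =>
        le_min (card_filter_le _ _) (hc j ▸ card_le_card (filter_subset_filter _ (subset_univ s)))

theorem prefixSum_le {n : ℕ} {r c : Fin n → ℕ} (h : IsBigraphic r c) {k : ℕ} (hk : k ≤ n) :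
    prefixSum r k ≤ k ^ 2 + ∑ i ∈ univ.filter (fun i : Fin n => k ≤ (i : ℕ)), min k (c i) := by
  have hs := h.sum_le_sum_min (univ.filter fun i : Fin n => (i : ℕ) < k)
  rw [Fin.card_filter_val_lt, min_eq_right hk,
    ← sum_filter_add_sum_filter_not univ fun i : Fin n => (i : ℕ) < k] at hs
  simp only [not_lt] at hs
  have hsq : ∑ i ∈ univ.filter (fun i : Fin n => (i : ℕ) < k), min k (c i) ≤ k ^ 2 :=
    (sum_le_sum fun _ _ => min_le_left _ _).trans (by simp [Fin.card_filter_val_lt, hk, sq])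
  exact hs.trans (by omega)

theorem add_single [DecidableEq κ] {p q : κ}
    (h : IsBigraphic r (c + Pi.single p 1)) (hqp : c q ≤ c p) :
    IsBigraphic r (c + Pi.single q 1) := by
  classical
  obtain rfl | hpq := eq_or_ne p q
  · exact h
  obtain ⟨A, hr, hc⟩ := h
  have hcard : #{i | A i q} < #{i | A i p} := by
    simp only [hc, Pi.add_apply, Pi.single_eq_same, Pi.single_eq_of_ne hpq.symm]; omega
  obtain ⟨i, hip, hiq⟩ := exists_mem_notMem_of_card_lt_card hcard
  simp only [mem_filter, mem_univ, true_and, Bool.not_eq_true] at hip hiq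
  set B := Function.update A i (A i ∘ Equiv.swap p q)
  have hB : ∀ i' j, B i' j = if i' = i then A i (Equiv.swap p q j) else A i' j := by
    intro i' j
    by_cases hi' : i' = i
    · subst hi'; simp [B]
    · simp [B, hi']
  refine ⟨B, fun i' => ?_, fun j => ?_⟩
  · by_cases hi' : i' = i
    · subst hi'
      simp only [hB, if_pos, ← hr i', card_filter]
      exact Equiv.sum_comp (Equiv.swap p q) fun j => if A i' j then 1 else 0
    · simpa only [hB, hi', if_false] using hr i'
  · by_cases hjp : j = p
    · subst hjp
      have : filter (fun i' => B i' j) univ = (filter (fun i' => A i' j) univ).erase i := by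
        ext i'; by_cases hi' : i' = i <;> simp [hB, hi', hiq]
      rw [this, card_erase_of_mem (by simpa using hip), hc]
      simp [hpq]
    by_cases hjq : j = q
    · subst hjq
      have : filter (fun i' => B i' j) univ = insert i (filter (fun i' => A i' j) univ) := by
        ext i'; by_cases hi' : i' = i <;> simp [hB, hi', hip]
      rw [this, card_insert_of_notMem (by simpa using hiq), hc]
      simp [hjp]
    · have : filter (fun i' => B i' j) univ = filter (fun i' => A i' j) univ := by
        ext i'; by_cases hi' : i' = i <;> simp [hB, hi', Equiv.swap_apply_of_ne_of_ne hjp hjq]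
      rw [this, hc]
      simp [hjp, hjq]

end IsBigraphic

section conjugate

variable {ι : Type*} [Fintype ι]

def conjugateSeq (r : ι → ℕ) (m : ℕ) (j : Fin m) : ℕ := #{i | (j : ℕ) < r i}

theorem isBigraphic_conjugateSeq {r : ι → ℕ} {m : ℕ} (hr : ∀ i, r i ≤ m) :
    IsBigraphic r (conjugateSeq r m) :=
  ⟨fun i j => decide ((j : ℕ) < r i), fun i => by simp [Fin.card_filter_val_lt, hr i],
    fun j => by simp [conjugateSeq]⟩

theorem prefixSum_conjugateSeq (r : ι → ℕ) {m k : ℕ} (hk : k ≤ m) :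
    prefixSum (conjugateSeq r m) k = ∑ i, min (r i) k := by
  unfold prefixSum conjugateSeq
  simp only [card_filter]
  rw [sum_comm]
  refine sum_congr rfl fun i _ => ?_
  rw [← card_filter, filter_filter]
  simp only [← lt_min_iff, Fin.card_filter_val_lt]
  omega

end conjugate

section dominance

variable {m : ℕ} {c d : Fin m → ℕ}

theorem exists_transfer_of_dominates (hd : Antitone d)
    (hdom : ∀ k ≤ m, prefixSum d k ≤ prefixSum c k) (htot : ∑ i, c i = ∑ i, d i) (hcd : c ≠ d) :
    ∃ p q : Fin m, p < q ∧ c q < c p ∧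
      ∀ k, (p : ℕ) < k → k ≤ q → prefixSum d k < prefixSum c k := by
  have hex : ∃ q, c q < d q := by
    by_contra! h
    exact hcd <| funext fun i =>
      ((sum_eq_sum_iff_of_le fun i _ => h i).1 htot.symm i (mem_univ i)).symm
  obtain ⟨q, hq, hqmin⟩ := wellFounded_lt.has_min {q | c q < d q} hex
  obtain ⟨p, hpq, hp⟩ : ∃ p ≤ q, d p < c p := by
    by_contra! h
    have hlt : prefixSum c (q + 1) < prefixSum d (q + 1) :=
      sum_lt_sum (fun i hi => h i (Fin.le_def.2 (Nat.lt_succ_iff.1 (mem_filter.1 hi).2)))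
        ⟨q, by simp, hq⟩
    exact (hdom (q + 1) q.isLt).not_gt hlt
  have hpq : p < q := lt_of_le_of_ne hpq fun h => (hq.trans (h ▸ hp)).false
  refine ⟨p, q, hpq, (hq.trans_le (hd hpq.le)).trans hp, fun k hpk hkq => ?_⟩
  refine sum_lt_sum (fun i hi => ?_) ⟨p, by simpa using hpk, hp⟩
  exact not_lt.1 fun h => hqmin i h (Fin.lt_def.2 ((mem_filter.1 hi).2.trans_le hkq))

theorem IsBigraphic.of_dominates {ι : Type*} [Fintype ι] {r : ι → ℕ} (hd : Antitone d)
    (hc : IsBigraphic r c) (hdom : ∀ k ≤ m, prefixSum d k ≤ prefixSum c k)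
    (htot : ∑ i, c i = ∑ i, d i) : IsBigraphic r d := by
  induction hN : ∑ k ∈ range m, prefixSum c k using Nat.strong_induction_on generalizing c with
  | _ N ih =>
  by_cases hcd : c = d
  · exact hcd ▸ hc
  obtain ⟨p, q, hpq, hqp, hlt⟩ := exists_transfer_of_dominates hd hdom htot hcd
  set c₀ := c - Pi.single p 1
  have hc₀ : c₀ + Pi.single p 1 = c := by
    ext i
    by_cases hi : i = p
    · subst hi; simp [c₀]; omega
    · simp [c₀, hi]
  have hS : ∀ k, prefixSum (c₀ + Pi.single q 1) k + (if (p : ℕ) < k then 1 else 0) =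
      prefixSum c k + (if (q : ℕ) < k then 1 else 0) := by
    intro k
    rw [← hc₀, prefixSum_add, prefixSum_add, prefixSum_single, prefixSum_single]
    ring
  have hqp₀ : c₀ q ≤ c₀ p := by simp [c₀, hpq.ne']; omega
  refine ih _ ?_ (hc₀ ▸ hc |>.add_single hqp₀) (fun k hk => ?_) ?_ rfl
  · rw [← hN]
    refine sum_lt_sum (fun k _ => ?_) ⟨q, by simp, ?_⟩
    · have := hS k
      split_ifs at this <;> omega
    · have := hS q
      rw [if_pos (show (p : ℕ) < q from hpq), if_neg (lt_irrefl _)] at this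
      omega
  · have := hS k
    have := hdom k hk
    have := hlt k
    split_ifs at * <;> omega
  · have := hS m
    rw [prefixSum_of_le _ le_rfl, prefixSum_of_le _ le_rfl, if_pos p.isLt, if_pos q.isLt] at this
    omega

end dominance

theorem Antitone.exists_threshold {n : ℕ} {d : Fin n → ℕ} (hd : Antitone d) (k : ℕ) :
    ∃ t ≤ k, ∀ i : Fin n, ((i : ℕ) < t → k ≤ d i) ∧ (t ≤ i → (i : ℕ) < k → d i < k) := by
  classical
  have hP : ∃ t, t = k ∨ ∃ i : Fin n, (i : ℕ) = t ∧ d i < k := ⟨k, .inl rfl⟩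
  refine ⟨Nat.find hP, Nat.find_min' hP (.inl rfl), fun i => ⟨fun hi => ?_, fun hti hik => ?_⟩⟩
  · by_contra! h
    exact Nat.find_min hP hi (.inr ⟨i, rfl, h⟩)
  · rcases Nat.find_spec hP with h | ⟨j, hj, hjk⟩
    · omega
    · exact (hd (Fin.le_def.2 (hj ▸ hti))).trans_lt hjk

theorem prefixSum_le_sum_min_of_antitone {n : ℕ} {d : Fin n → ℕ} (hd : Antitone d)
    (hG : ∀ k, 1 ≤ k → k ≤ n →
      prefixSum d k ≤ k ^ 2 + ∑ i ∈ univ.filter (fun i : Fin n => k ≤ (i : ℕ)), min k (d i))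
    {k : ℕ} (hk : k ≤ n) : prefixSum d k ≤ ∑ i, min (d i) k := by
  obtain ⟨t, htk, ht⟩ := hd.exists_threshold k
  have hGt : prefixSum d t ≤
      t ^ 2 + ∑ i ∈ univ.filter (fun i : Fin n => t ≤ (i : ℕ)), min t (d i) := by
    rcases t.eq_zero_or_pos with rfl | ht0
    · simp [prefixSum]
    · exact hG t ht0 (htk.trans hk)
  -- Summed over `i` and added to `hGt`, the extra terms `t (t + k)` and `k t + t²` cancel.
  have key := sum_le_sum fun (i : Fin n) (_ : i ∈ univ) =>
    show (if (i : ℕ) < k then d i else 0) + (if (i : ℕ) < t then t + k else 0) +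
        (if t ≤ (i : ℕ) then min t (d i) else 0) ≤
      min (d i) k + (if (i : ℕ) < t then d i else 0) + (if (i : ℕ) < k then t else 0) by
    have := ht i
    split_ifs <;> omega
  simp only [sum_add_distrib, ← sum_filter, sum_const, Fin.card_filter_val_lt, smul_eq_mul,
    min_eq_right hk, min_eq_right (htk.trans hk)] at key
  unfold prefixSum at hGt ⊢
  linarith

/-- Erdős–Gallai type criterion for bipartite graphic sequences: a decreasing
sequence `d` is bipartite graphic iff
`∑_{i=1}^k d_i ≤ k² + ∑_{i=k+1}^n min{k, d_i}` for all `1 ≤ k ≤ n`. -/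
theorem stmt_3 (n : ℕ) (d : Fin n → ℕ) (hd : Antitone d) :
    (∃ A : Fin n → Fin n → Bool,
        (∀ i, (univ.filter (fun j => A i j = true)).card = d i) ∧
        (∀ j, (univ.filter (fun i => A i j = true)).card = d j))
    ↔ (∀ k : ℕ, 1 ≤ k → k ≤ n →
        ∑ i ∈ univ.filter (fun i : Fin n => (i : ℕ) < k), d i
          ≤ k ^ 2 + ∑ i ∈ univ.filter (fun i : Fin n => k ≤ (i : ℕ)), min k (d i)) := by
  refine ⟨fun h k _ hk => IsBigraphic.prefixSum_le h hk, fun hG => ?_⟩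
  have hdom : ∀ k ≤ n, prefixSum d k ≤ ∑ i, min (d i) k :=
    fun k hk => prefixSum_le_sum_min_of_antitone hd hG hk
  have hdn : ∀ i, d i ≤ n := fun i => calc
    d i ≤ d ⟨0, i.pos⟩ := hd (Nat.zero_le _)
    _ ≤ prefixSum d 1 := single_le_sum (fun _ _ => Nat.zero_le _) (by simp)
    _ ≤ ∑ j, min (d j) 1 := hdom 1 i.pos
    _ ≤ ∑ _j : Fin n, 1 := sum_le_sum fun _ _ => min_le_right _ _
    _ = n := by simp
  refine (isBigraphic_conjugateSeq hdn).of_dominates hd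
    (fun k hk => (hdom k hk).trans_eq (prefixSum_conjugateSeq d hk).symm) ?_
  rw [← prefixSum_of_le _ le_rfl, prefixSum_conjugateSeq d le_rfl]
  exact sum_congr rfl fun i _ => min_eq_left (hdn i)
end

section
/- If a sequence d = (d_1, ..., d_n) of nonnegative integers is bipartite graphic, then it admits a symmetric realization: there exists an n × n matrix A with entries 0 or 1 such that A is symmetric (A_{ij} = A_{ji} for all i, j, with diagonal entries allowed to be 1) and for each i, the i-th row sum of A equals d_i. Conversely, the existence of such a symmetric 0-1 matrix implies d is bipartite graphic. -/
open Finset Function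

namespace Stmt4Aux

variable {n : ℕ}

def rs (A : Fin n → Fin n → Bool) (i : Fin n) : ℕ :=
  (univ.filter (fun j => A i j = true)).card

def cs (A : Fin n → Fin n → Bool) (j : Fin n) : ℕ :=
  (univ.filter (fun i => A i j = true)).card

def bi (b : Bool) : ℤ := if b = true then 1 else 0

lemma rs_int (A : Fin n → Fin n → Bool) (i : Fin n) :
    (rs A i : ℤ) = ∑ j, bi (A i j) := by
  rw [rs, card_filter]
  push_cast
  rfl

lemma cs_int (A : Fin n → Fin n → Bool) (j : Fin n) :
    (cs A j : ℤ) = ∑ i, bi (A i j) := by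
  rw [cs, card_filter]
  push_cast
  rfl


lemma step (A : Fin n → Fin n → Bool) (h : ∀ i, rs A i = cs A i) (v : Fin n)
    (hv : ∃ u, A u v = true ∧ A v u = false) : ∃ w, A v w = true ∧ A w v = false := by
  obtain ⟨u, hu1, hu2⟩ := hv
  by_contra hc
  push_neg at hc
  have hsplit1 : ((univ.filter (fun w => A v w = true)).filter (fun w => A w v = true)).card
      + ((univ.filter (fun w => A v w = true)).filter (fun w => ¬ A w v = true)).card
      = rs A v := card_filter_add_card_filter_not _
  have hsplit2 : ((univ.filter (fun w => A w v = true)).filter (fun w => A v w = true)).card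
      + ((univ.filter (fun w => A w v = true)).filter (fun w => ¬ A v w = true)).card
      = cs A v := card_filter_add_card_filter_not _
  have hTT : ((univ.filter (fun w => A v w = true)).filter (fun w => A w v = true))
      = ((univ.filter (fun w => A w v = true)).filter (fun w => A v w = true)) := by
    simp only [filter_filter]
    exact filter_congr (fun w _ => by tauto)
  have hO : ((univ.filter (fun w => A v w = true)).filter (fun w => ¬ A w v = true)) = ∅ := by
    rw [filter_eq_empty_iff]
    intro w hw
    simp only [mem_filter, mem_univ, true_and] at hw
    intro hne
    exact absurd (hc w hw) (by simp [Bool.not_eq_false] at hne ⊢; exact hne)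
  have hI : u ∈ ((univ.filter (fun w => A w v = true)).filter (fun w => ¬ A v w = true)) := by
    simp [hu1, hu2]
  have := h v
  rw [← hsplit1, ← hsplit2, hTT, hO] at this
  simp only [card_empty, add_zero] at this
  have hpos : 0 < ((univ.filter (fun w => A w v = true)).filter (fun w => ¬ A v w = true)).card :=
    card_pos.mpr ⟨u, hI⟩
  omega


lemma exists_cycle (A : Fin n → Fin n → Bool) (h : ∀ i, rs A i = cs A i)
    (u0 v0 : Fin n) (h0 : A u0 v0 = true) (h0' : A v0 u0 = false) :
    ∃ (m : ℕ) (x : ℕ → Fin n), 3 ≤ m ∧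
      (∀ t, A (x t) (x (t + 1)) = true ∧ A (x (t + 1)) (x t) = false) ∧
      (∀ a b, x a = x b ↔ a % m = b % m) := by
  set P : Fin n → Prop := fun v => ∃ u, A u v = true ∧ A v u = false with hP
  let V := {v : Fin n // P v}
  have hx0 : P v0 := ⟨u0, h0, h0'⟩
  let f : V → V := fun z =>
    ⟨(step A h z.1 z.2).choose, z.1, (step A h z.1 z.2).choose_spec.1,
      (step A h z.1 z.2).choose_spec.2⟩
  have hf : ∀ z : V, A z.1 (f z).1 = true ∧ A (f z).1 z.1 = false := fun z =>
    ⟨(step A h z.1 z.2).choose_spec.1, (step A h z.1 z.2).choose_spec.2⟩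
  obtain ⟨a, b, hab, heq⟩ := Finite.exists_ne_map_eq_of_infinite (fun k : ℕ => f^[k] ⟨v0, hx0⟩)
  wlog hlt : a < b generalizing a b
  · exact this b a hab.symm heq.symm (by omega)
  set y : V := f^[a] ⟨v0, hx0⟩ with hy
  have hper : IsPeriodicPt f (b - a) y := by
    show f^[b-a] y = y
    rw [hy, ← Function.iterate_add_apply]
    have : b - a + a = b := by omega
    rw [this]
    exact heq.symm
  set m := minimalPeriod f y with hm
  have hmpos : 0 < m := hper.minimalPeriod_pos (by omega)
  set x : ℕ → Fin n := fun t => (f^[t] y).1 with hxdef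
  have hstep : ∀ t, A (x t) (x (t + 1)) = true ∧ A (x (t + 1)) (x t) = false := by
    intro t
    have : f^[t+1] y = f (f^[t] y) := Function.iterate_succ_apply' f t y
    simp only [hxdef, this]
    exact hf (f^[t] y)
  have hiter : ∀ t, f^[t + m] y = f^[t] y := by
    intro t
    rw [Function.iterate_add_apply]
    exact congrArg _ (isPeriodicPt_minimalPeriod f y)
  have hiterk : ∀ k s, f^[s + m * k] y = f^[s] y := by
    intro k
    induction k with
    | zero => simp
    | succ k ih =>
      intro s
      have he : s + m * (k + 1) = s + m * k + m := by ring
      rw [he, hiter (s + m * k), ih s]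
  have hmodx : ∀ t, x t = x (t % m) := by
    intro t
    conv_lhs => rw [← Nat.mod_add_div t m]
    simp only [hxdef]
    congr 1
    exact hiterk (t / m) (t % m)
  have hinj : ∀ s t, s < m → t < m → x s = x t → s = t := by
    intro s t hs ht hst
    have : f^[s] y = f^[t] y := Subtype.ext hst
    exact (iterate_eq_iterate_iff_of_lt_minimalPeriod hs ht).mp this
  have hmod : ∀ a b, x a = x b ↔ a % m = b % m := by
    intro a b
    constructor
    · intro hab2
      rw [hmodx a, hmodx b] at hab2
      exact hinj _ _ (Nat.mod_lt _ hmpos) (Nat.mod_lt _ hmpos) hab2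
    · intro hab2
      rw [hmodx a, hmodx b, hab2]
  have hm1 : m ≠ 1 := by
    intro h1
    have : x 1 = x 0 := by rw [hmod]; simp [h1]
    have h2 := hstep 0
    rw [this] at h2
    exact absurd (h2.1.symm.trans h2.2) (by simp)
  have hm2 : m ≠ 2 := by
    intro h2
    have hx20 : x 2 = x 0 := by rw [hmod]; simp [h2]
    have e1 := (hstep 1).1
    have e0 := (hstep 0).2
    rw [show (1:ℕ)+1 = 2 by rfl, hx20] at e1
    rw [e1] at e0
    simp at e0
  exact ⟨m, x, by omega, hstep, hmod⟩


lemma reduce (A : Fin n → Fin n → Bool) (h : ∀ i, rs A i = cs A i)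
    (u0 v0 : Fin n) (h0 : A u0 v0 = true) (h0' : A v0 u0 = false) :
    ∃ A' : Fin n → Fin n → Bool, (∀ i, rs A' i = rs A i) ∧ (∀ i, cs A' i = cs A i) ∧
      (univ.filter (fun q : Fin n × Fin n => ¬ A' q.1 q.2 = A' q.2 q.1)).card <
      (univ.filter (fun q : Fin n × Fin n => ¬ A q.1 q.2 = A q.2 q.1)).card := by
  classical
  obtain ⟨m, x, hm3, hD, hmod⟩ := exists_cycle A h u0 v0 h0 h0'
  have hmpos : 0 < m := by omega
  -- basic facts
  have hxne : ∀ t, x t ≠ x (t + 1) := by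
    intro t heq
    have h1 := (hD t).1
    have h2 := (hD t).2
    rw [← heq] at h1 h2
    exact absurd (h1.symm.trans h2) (by simp)
  have hrev : ∀ s t, x s = x (t + 1) → x (s + 1) = x t → False := by
    intro s t h1 h2
    have e := (hD s).1
    rw [h1, h2, (hD t).2] at e
    exact absurd e (by simp)
  have huniq : ∀ s t, s < m → t < m → x s = x t → s = t := by
    intro s t hs ht hst
    have := (hmod s t).1 hst
    rwa [Nat.mod_eq_of_lt hs, Nat.mod_eq_of_lt ht] at this
  have hsucc : ∀ s t, s < m → t < m → x (s + 1) = x (t + 1) → s = t := by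
    intro s t hs ht hst
    have hmm := (hmod (s + 1) (t + 1)).1 hst
    rcases Nat.lt_or_ge (s + 1) m with h1 | h1
    · rcases Nat.lt_or_ge (t + 1) m with h2 | h2
      · rw [Nat.mod_eq_of_lt h1, Nat.mod_eq_of_lt h2] at hmm; omega
      · have ht1 : t + 1 = m := by omega
        rw [Nat.mod_eq_of_lt h1, ht1, Nat.mod_self] at hmm; omega
    · have hs1 : s + 1 = m := by omega
      rcases Nat.lt_or_ge (t + 1) m with h2 | h2
      · rw [Nat.mod_eq_of_lt h2, hs1, Nat.mod_self] at hmm; omega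
      · omega
  -- the sign pattern
  set c : Bool := !(A (x 0) (x 0)) with hc
  set ε : ℕ → Bool := fun t => xor (decide (t % 2 = 0)) c with hε
  have hflip : ∀ s t : ℕ, s % 2 ≠ t % 2 → ε s = !(ε t) := by
    intro s t hst
    have h1 : decide (s % 2 = 0) = !decide (t % 2 = 0) := by
      by_cases hs : s % 2 = 0 <;> by_cases ht : t % 2 = 0 <;> simp [hs, ht] <;> omega
    simp only [hε, h1]
    cases decide (t % 2 = 0) <;> cases c <;> rfl
  have heqpar : ∀ s t : ℕ, s % 2 = t % 2 → ε s = ε t := by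
    intro s t hst
    simp only [hε, hst]
  have hε0 : ε 0 = A (x 0) (x 0) := by
    simp only [hε, hc]
    cases A (x 0) (x 0) <;> rfl
  -- the new matrix
  set A' : Fin n → Fin n → Bool := fun u v =>
    if ∃ t, t < m ∧ ε t = false ∧ u = x t ∧ v = x (t + 1) then false
    else if ∃ t, t < m ∧ ε t = true ∧ u = x (t + 1) ∧ v = x t then true
    else if m % 2 = 1 ∧ u = x 0 ∧ v = x 0 then !(A u v)
    else A u v with hA'
  -- characterization lemmas
  have hnotDel : ∀ t, t < m → ε t = true →
      ¬ ∃ s, s < m ∧ ε s = false ∧ x t = x s ∧ x (t + 1) = x (s + 1) := by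
    intro t ht hεt ⟨s, hs, hεs, h1, h2⟩
    rw [huniq t s ht hs h1] at hεt
    rw [hεt] at hεs; exact absurd hεs (by simp)
  have harc1 : ∀ t, t < m → A' (x t) (x (t + 1)) = ε t := by
    intro t ht
    cases hεt : ε t with
    | false =>
      simp only [hA']
      rw [if_pos ⟨t, ht, hεt, rfl, rfl⟩]
    | true =>
      simp only [hA']
      rw [if_neg (hnotDel t ht hεt)]
      rw [if_neg (fun ⟨s, hs, hεs, h1, h2⟩ => hrev t s h1 h2)]
      rw [if_neg (fun ⟨hm1, h1, h2⟩ => hxne t (h1.trans h2.symm))]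
      exact (hD t).1
  have harc2 : ∀ t, t < m → A' (x (t + 1)) (x t) = ε t := by
    intro t ht
    simp only [hA']
    rw [if_neg (fun ⟨s, hs, hεs, h1, h2⟩ => hrev s t h1.symm h2.symm)]
    cases hεt : ε t with
    | true =>
      rw [if_pos ⟨t, ht, hεt, rfl, rfl⟩]
    | false =>
      rw [if_neg (fun ⟨s, hs, hεs, h1, h2⟩ => by
        rw [hsucc t s ht hs h1] at hεt; rw [hεt] at hεs; exact absurd hεs (by simp))]
      rw [if_neg (fun ⟨hm1, h1, h2⟩ => hxne t (h2.trans h1.symm))]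
      exact (hD t).2
  have hdiagsame : ∀ u v : Fin n, ¬ (∃ s, s < m ∧ ε s = false ∧ u = x s ∧ v = x (s + 1)) →
      ¬ (∃ s, s < m ∧ ε s = true ∧ u = x (s + 1) ∧ v = x s) →
      A' u v = if m % 2 = 1 ∧ u = x 0 ∧ v = x 0 then !(A u v) else A u v := by
    intro u v h1 h2
    simp only [hA']
    rw [if_neg h1, if_neg h2]
  have hdiag : A' (x 0) (x 0) = if m % 2 = 1 then !(A (x 0) (x 0)) else A (x 0) (x 0) := by
    rw [hdiagsame _ _ (fun ⟨s, hs, _, h1, h2⟩ => hxne s (h1.symm.trans h2))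
      (fun ⟨s, hs, _, h1, h2⟩ => hxne s (h2.symm.trans h1))]
    by_cases hmp : m % 2 = 1
    · rw [if_pos ⟨hmp, rfl, rfl⟩, if_pos hmp]
    · rw [if_neg (fun hq => hmp hq.1), if_neg hmp]
  have hmodx' : ∀ a, x (a % m) = x a := fun a => (hmod _ _).2 (Nat.mod_mod_of_dvd a dvd_rfl)
  -- facts about the predecessor index
  have hrow : ∀ v, rs A' v = rs A v := by
    intro v
    by_cases hcyc : ∃ t, t < m ∧ v = x t
    · obtain ⟨t0, ht0, hv⟩ := hcyc
      subst hv
      obtain ⟨p, hpdef⟩ : ∃ p, p = (t0 + (m - 1)) % m := ⟨_, rfl⟩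
      have hplt : p < m := by rw [hpdef]; exact Nat.mod_lt _ hmpos
      have hp1 : x (p + 1) = x t0 := by
        rw [hmod, hpdef, Nat.mod_add_mod, show t0 + (m - 1) + 1 = t0 + m by omega,
          Nat.add_mod_right]
      have hpval : (t0 = 0 → p = m - 1) ∧ (t0 ≠ 0 → p = t0 - 1) := by
        constructor
        · intro h0''
          rw [hpdef, h0'', zero_add, Nat.mod_eq_of_lt (by omega)]
        · intro h0''
          rw [hpdef, show t0 + (m - 1) = (t0 - 1) + m by omega, Nat.add_mod_right,
            Nat.mod_eq_of_lt (by omega)]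
      have hne_av : x (t0 + 1) ≠ x t0 := by
        intro he
        have hmm := (hmod _ _).1 he
        rw [Nat.mod_eq_of_lt ht0] at hmm
        rcases Nat.lt_or_ge (t0 + 1) m with h1 | h1
        · rw [Nat.mod_eq_of_lt h1] at hmm; omega
        · rw [show t0 + 1 = m by omega, Nat.mod_self] at hmm; omega
      have hne_bv : x p ≠ x t0 := by
        intro he
        have := huniq p t0 hplt ht0 he
        by_cases h0'' : t0 = 0
        · have := hpval.1 h0''; omega
        · have := hpval.2 h0''; omega
      have hne_ab : x (t0 + 1) ≠ x p := by
        intro he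
        have hmm := (hmod _ _).1 he
        rw [Nat.mod_eq_of_lt hplt] at hmm
        rcases Nat.lt_or_ge (t0 + 1) m with h1 | h1
        · rw [Nat.mod_eq_of_lt h1] at hmm
          by_cases h0'' : t0 = 0
          · have := hpval.1 h0''; omega
          · have := hpval.2 h0''; omega
        · rw [show t0 + 1 = m by omega, Nat.mod_self] at hmm
          by_cases h0'' : t0 = 0
          · have := hpval.1 h0''; omega
          · have := hpval.2 h0''; omega
      obtain ⟨δc, hδc⟩ : ∃ δc : ℤ,
          δc = if m % 2 = 1 ∧ t0 = 0 then 1 - 2 * bi (A (x 0) (x 0)) else 0 := ⟨_, rfl⟩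
      have hR : (bi (ε t0) - 1) + bi (ε p) + δc = 0 := by
        by_cases h0'' : t0 = 0
        · have hp' : p = m - 1 := hpval.1 h0''
          by_cases hmp : m % 2 = 1
          · have hεp : ε p = ε t0 := by
              rw [hp', h0'']; exact heqpar _ _ (by omega)
            have hεt : ε t0 = A (x 0) (x 0) := by rw [h0'', hε0]
            rw [hδc, if_pos ⟨hmp, h0''⟩, hεp, hεt]
            cases A (x 0) (x 0) <;> simp [bi]
          · have hεp : ε p = !(ε t0) := by
              rw [hp', h0'']; exact hflip _ _ (by omega)
            rw [hδc, if_neg (fun hq => hmp hq.1), hεp]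
            cases ε t0 <;> simp [bi]
        · have hp' : p = t0 - 1 := hpval.2 h0''
          have hεp : ε p = !(ε t0) := by
            rw [hp']; exact hflip _ _ (by omega)
          rw [hδc, if_neg (fun hq => h0'' hq.2), hεp]
          cases ε t0 <;> simp [bi]
      have hpt : ∀ j, bi (A' (x t0) j) = bi (A (x t0) j)
          + (if j = x (t0 + 1) then bi (ε t0) - 1 else 0)
          + (if j = x p then bi (ε p) else 0)
          + (if j = x t0 then δc else 0) := by
        intro j
        by_cases hja : j = x (t0 + 1)
        · subst hja
          rw [harc1 t0 ht0, (hD t0).1, if_pos rfl, if_neg hne_ab, if_neg hne_av]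
          simp [bi]
        · by_cases hjb : j = x p
          · subst hjb
            have e1 : A' (x t0) (x p) = ε p := by rw [← hp1]; exact harc2 p hplt
            have e2 : A (x t0) (x p) = false := by rw [← hp1]; exact (hD p).2
            rw [e1, e2, if_neg (fun he => hne_ab he.symm), if_pos rfl, if_neg hne_bv]
            simp [bi]
          · by_cases hjv : j = x t0
            · subst hjv
              rw [hdiagsame _ _ (fun ⟨s, hs, _, h1, h2⟩ => hxne s (h1.symm.trans h2))
                (fun ⟨s, hs, _, h1, h2⟩ => hxne s (h2.symm.trans h1))]
              by_cases hq : m % 2 = 1 ∧ t0 = 0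
              · have hx0 : x t0 = x 0 := by rw [hq.2]
                have hdcond : m % 2 = 1 ∧ x t0 = x 0 ∧ x t0 = x 0 := ⟨hq.1, hx0, hx0⟩
                rw [if_pos hdcond]
                rw [if_neg (show ¬ x t0 = x (t0 + 1) from fun he => hne_av he.symm)]
                rw [if_neg (show ¬ x t0 = x p from fun he => hne_bv he.symm)]
                rw [if_pos rfl, hδc, if_pos hq]
                rw [show A (x t0) (x t0) = A (x 0) (x 0) from by rw [hx0]]
                cases A (x 0) (x 0) <;> simp [bi]
              · rw [if_neg (show ¬ (m % 2 = 1 ∧ x t0 = x 0 ∧ x t0 = x 0) from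
                  fun hq2 => hq ⟨hq2.1, huniq t0 0 ht0 hmpos hq2.2.1⟩)]
                rw [if_neg (show ¬ x t0 = x (t0 + 1) from fun he => hne_av he.symm)]
                rw [if_neg (show ¬ x t0 = x p from fun he => hne_bv he.symm)]
                rw [if_pos rfl, hδc, if_neg hq]
                ring
            · rw [hdiagsame _ _
                (fun ⟨s, hs, _, h1, h2⟩ => hja (by rw [huniq t0 s ht0 hs h1]; exact h2))
                (fun ⟨s, hs, _, h1, h2⟩ => hjb (by
                  rw [hsucc s p hs hplt (h1.symm.trans hp1.symm)] at h2; exact h2))]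
              rw [if_neg (fun hq => hjv (hq.2.2.trans hq.2.1.symm)),
                if_neg hja, if_neg hjb, if_neg hjv]
              ring
      have hsum : (rs A' (x t0) : ℤ) = (rs A (x t0) : ℤ) := by
        rw [rs_int, rs_int]
        calc ∑ j, bi (A' (x t0) j) = ∑ j, (bi (A (x t0) j)
              + (if j = x (t0 + 1) then bi (ε t0) - 1 else 0)
              + (if j = x p then bi (ε p) else 0)
              + (if j = x t0 then δc else 0)) := Finset.sum_congr rfl (fun j _ => hpt j)
          _ = (∑ j, bi (A (x t0) j)) + ((bi (ε t0) - 1) + bi (ε p) + δc) := by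
              rw [Finset.sum_add_distrib, Finset.sum_add_distrib, Finset.sum_add_distrib]
              simp only [Finset.sum_ite_eq', Finset.mem_univ, if_true]
              ring
          _ = ∑ j, bi (A (x t0) j) := by rw [hR, add_zero]
      exact_mod_cast hsum
    · have hfix : ∀ j, A' v j = A v j := by
        intro j
        rw [hdiagsame _ _ (fun ⟨s, hs, _, h1, _⟩ => hcyc ⟨s, hs, h1⟩)
          (fun ⟨s, hs, _, h1, _⟩ => hcyc ⟨(s + 1) % m, Nat.mod_lt _ hmpos,
            by rw [hmodx']; exact h1⟩)]
        rw [if_neg (fun hq => hcyc ⟨0, hmpos, hq.2.1⟩)]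
      simp only [rs]
      congr 1
      apply filter_congr
      intro j _
      rw [hfix j]
  have hcol : ∀ v, cs A' v = cs A v := by
    intro v
    by_cases hcyc : ∃ t, t < m ∧ v = x t
    · obtain ⟨t0, ht0, hv⟩ := hcyc
      subst hv
      obtain ⟨p, hpdef⟩ : ∃ p, p = (t0 + (m - 1)) % m := ⟨_, rfl⟩
      have hplt : p < m := by rw [hpdef]; exact Nat.mod_lt _ hmpos
      have hp1 : x (p + 1) = x t0 := by
        rw [hmod, hpdef, Nat.mod_add_mod, show t0 + (m - 1) + 1 = t0 + m by omega,
          Nat.add_mod_right]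
      have hpval : (t0 = 0 → p = m - 1) ∧ (t0 ≠ 0 → p = t0 - 1) := by
        constructor
        · intro h0''
          rw [hpdef, h0'', zero_add, Nat.mod_eq_of_lt (by omega)]
        · intro h0''
          rw [hpdef, show t0 + (m - 1) = (t0 - 1) + m by omega, Nat.add_mod_right,
            Nat.mod_eq_of_lt (by omega)]
      have hne_av : x (t0 + 1) ≠ x t0 := by
        intro he
        have hmm := (hmod _ _).1 he
        rw [Nat.mod_eq_of_lt ht0] at hmm
        rcases Nat.lt_or_ge (t0 + 1) m with h1 | h1
        · rw [Nat.mod_eq_of_lt h1] at hmm; omega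
        · rw [show t0 + 1 = m by omega, Nat.mod_self] at hmm; omega
      have hne_bv : x p ≠ x t0 := by
        intro he
        have := huniq p t0 hplt ht0 he
        by_cases h0'' : t0 = 0
        · have := hpval.1 h0''; omega
        · have := hpval.2 h0''; omega
      have hne_ab : x (t0 + 1) ≠ x p := by
        intro he
        have hmm := (hmod _ _).1 he
        rw [Nat.mod_eq_of_lt hplt] at hmm
        rcases Nat.lt_or_ge (t0 + 1) m with h1 | h1
        · rw [Nat.mod_eq_of_lt h1] at hmm
          by_cases h0'' : t0 = 0
          · have := hpval.1 h0''; omega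
          · have := hpval.2 h0''; omega
        · rw [show t0 + 1 = m by omega, Nat.mod_self] at hmm
          by_cases h0'' : t0 = 0
          · have := hpval.1 h0''; omega
          · have := hpval.2 h0''; omega
      obtain ⟨δc, hδc⟩ : ∃ δc : ℤ,
          δc = if m % 2 = 1 ∧ t0 = 0 then 1 - 2 * bi (A (x 0) (x 0)) else 0 := ⟨_, rfl⟩
      have hR : (bi (ε p) - 1) + bi (ε t0) + δc = 0 := by
        by_cases h0'' : t0 = 0
        · have hp' : p = m - 1 := hpval.1 h0''
          by_cases hmp : m % 2 = 1
          · have hεp : ε p = ε t0 := by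
              rw [hp', h0'']; exact heqpar _ _ (by omega)
            have hεt : ε t0 = A (x 0) (x 0) := by rw [h0'', hε0]
            rw [hδc, if_pos ⟨hmp, h0''⟩, hεp, hεt]
            cases A (x 0) (x 0) <;> simp [bi]
          · have hεp : ε p = !(ε t0) := by
              rw [hp', h0'']; exact hflip _ _ (by omega)
            rw [hδc, if_neg (fun hq => hmp hq.1), hεp]
            cases ε t0 <;> simp [bi]
        · have hp' : p = t0 - 1 := hpval.2 h0''
          have hεp : ε p = !(ε t0) := by
            rw [hp']; exact hflip _ _ (by omega)
          rw [hδc, if_neg (fun hq => h0'' hq.2), hεp]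
          cases ε t0 <;> simp [bi]
      have hpt : ∀ i, bi (A' i (x t0)) = bi (A i (x t0))
          + (if i = x p then bi (ε p) - 1 else 0)
          + (if i = x (t0 + 1) then bi (ε t0) else 0)
          + (if i = x t0 then δc else 0) := by
        intro i
        by_cases hib : i = x p
        · subst hib
          have e1 : A' (x p) (x t0) = ε p := by rw [← hp1]; exact harc1 p hplt
          have e2 : A (x p) (x t0) = true := by rw [← hp1]; exact (hD p).1
          rw [e1, e2, if_pos rfl,
            if_neg (show ¬ x p = x (t0 + 1) from fun he => hne_ab he.symm),
            if_neg hne_bv]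
          simp [bi]
        · by_cases hia : i = x (t0 + 1)
          · subst hia
            rw [harc2 t0 ht0, (hD t0).2, if_neg hne_ab, if_pos rfl, if_neg hne_av]
            simp [bi]
          · by_cases hiv : i = x t0
            · subst hiv
              rw [hdiagsame _ _ (fun ⟨s, hs, _, h1, h2⟩ => hxne s (h1.symm.trans h2))
                (fun ⟨s, hs, _, h1, h2⟩ => hxne s (h2.symm.trans h1))]
              by_cases hq : m % 2 = 1 ∧ t0 = 0
              · have hx0 : x t0 = x 0 := by rw [hq.2]
                have hdcond : m % 2 = 1 ∧ x t0 = x 0 ∧ x t0 = x 0 := ⟨hq.1, hx0, hx0⟩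
                rw [if_pos hdcond]
                rw [if_neg (show ¬ x t0 = x p from fun he => hne_bv he.symm)]
                rw [if_neg (show ¬ x t0 = x (t0 + 1) from fun he => hne_av he.symm)]
                rw [if_pos rfl, hδc, if_pos hq]
                rw [show A (x t0) (x t0) = A (x 0) (x 0) from by rw [hx0]]
                cases A (x 0) (x 0) <;> simp [bi]
              · rw [if_neg (show ¬ (m % 2 = 1 ∧ x t0 = x 0 ∧ x t0 = x 0) from
                  fun hq2 => hq ⟨hq2.1, huniq t0 0 ht0 hmpos hq2.2.1⟩)]
                rw [if_neg (show ¬ x t0 = x p from fun he => hne_bv he.symm)]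
                rw [if_neg (show ¬ x t0 = x (t0 + 1) from fun he => hne_av he.symm)]
                rw [if_pos rfl, hδc, if_neg hq]
                ring
            · rw [hdiagsame _ _
                (fun ⟨s, hs, _, h1, h2⟩ => hib (by
                  rw [hsucc s p hs hplt (h2.symm.trans hp1.symm)] at h1; exact h1))
                (fun ⟨s, hs, _, h1, h2⟩ => hia (by
                  rw [← huniq t0 s ht0 hs h2] at h1; exact h1))]
              rw [if_neg (fun hq => hiv (hq.2.1.trans hq.2.2.symm)),
                if_neg hib, if_neg hia, if_neg hiv]
              ring
      have hsum : (cs A' (x t0) : ℤ) = (cs A (x t0) : ℤ) := by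
        rw [cs_int, cs_int]
        calc ∑ i, bi (A' i (x t0)) = ∑ i, (bi (A i (x t0))
              + (if i = x p then bi (ε p) - 1 else 0)
              + (if i = x (t0 + 1) then bi (ε t0) else 0)
              + (if i = x t0 then δc else 0)) := Finset.sum_congr rfl (fun i _ => hpt i)
          _ = (∑ i, bi (A i (x t0))) + ((bi (ε p) - 1) + bi (ε t0) + δc) := by
              rw [Finset.sum_add_distrib, Finset.sum_add_distrib, Finset.sum_add_distrib]
              simp only [Finset.sum_ite_eq', Finset.mem_univ, if_true]
              ring
          _ = ∑ i, bi (A i (x t0)) := by rw [hR, add_zero]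
      exact_mod_cast hsum
    · have hfix : ∀ i, A' i v = A i v := by
        intro i
        rw [hdiagsame _ _
          (fun ⟨s, hs, _, _, h2⟩ => hcyc ⟨(s + 1) % m, Nat.mod_lt _ hmpos,
            by rw [hmodx']; exact h2⟩)
          (fun ⟨s, hs, _, _, h2⟩ => hcyc ⟨s, hs, h2⟩)]
        rw [if_neg (fun hq => hcyc ⟨0, hmpos, hq.2.2⟩)]
      simp only [cs]
      congr 1
      apply filter_congr
      intro i _
      rw [hfix i]
  -- symmetry preservation outside the cycle
  have hsymm_pres : ∀ u v : Fin n, A u v = A v u → A' u v = A' v u := by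
    have hnd : ∀ (w z : Fin n), A w z = A z w →
        ¬ ∃ s, s < m ∧ ε s = false ∧ w = x s ∧ z = x (s + 1) := by
      intro w z hwz ⟨s, hs, _, h1, h2⟩
      rw [h1, h2, (hD s).1, (hD s).2] at hwz
      exact absurd hwz (by simp)
    have hnc : ∀ (w z : Fin n), A w z = A z w →
        ¬ ∃ s, s < m ∧ ε s = true ∧ w = x (s + 1) ∧ z = x s := by
      intro w z hwz ⟨s, hs, _, h1, h2⟩
      rw [h1, h2, (hD s).1, (hD s).2] at hwz
      exact absurd hwz (by simp)
    intro u v huv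
    rw [hdiagsame u v (hnd u v huv) (hnc u v huv),
      hdiagsame v u (hnd v u huv.symm) (hnc v u huv.symm)]
    by_cases hq : m % 2 = 1 ∧ u = x 0 ∧ v = x 0
    · rw [if_pos hq, if_pos ⟨hq.1, hq.2.2, hq.2.1⟩, huv]
    · rw [if_neg hq, if_neg (fun hq2 => hq ⟨hq2.1, hq2.2.2, hq2.2.1⟩), huv]
  refine ⟨A', hrow, hcol, ?_⟩
  apply Finset.card_lt_card
  rw [Finset.ssubset_iff_of_subset]
  · refine ⟨⟨x 0, x 1⟩, ?_, ?_⟩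
    · simp only [mem_filter, mem_univ, true_and]
      rw [(hD 0).1, (hD 0).2]
      simp
    · simp only [mem_filter, mem_univ, true_and, not_not]
      have e1 : A' (x 0) (x 1) = ε 0 := harc1 0 hmpos
      have e2 : A' (x 1) (x 0) = ε 0 := harc2 0 hmpos
      rw [e1, e2]
  · intro q hq
    simp only [mem_filter, mem_univ, true_and] at hq ⊢
    exact fun he => hq (hsymm_pres _ _ he)


lemma symmetrize (N : ℕ) : ∀ (A : Fin n → Fin n → Bool),
    (univ.filter (fun q : Fin n × Fin n => ¬ A q.1 q.2 = A q.2 q.1)).card ≤ N →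
    (∀ i, rs A i = cs A i) →
    ∃ B : Fin n → Fin n → Bool, (∀ i j, B i j = B j i) ∧ (∀ i, rs B i = rs A i) := by
  induction N with
  | zero =>
    intro A hA h
    have hsym : ∀ i j, A i j = A j i := by
      intro i j
      by_contra hne
      have hmem : (⟨i, j⟩ : Fin n × Fin n) ∈
          (univ.filter (fun q : Fin n × Fin n => ¬ A q.1 q.2 = A q.2 q.1)) := by
        simp only [mem_filter, mem_univ, true_and]
        exact hne
      have := Finset.card_pos.mpr ⟨_, hmem⟩
      omega
    exact ⟨A, hsym, fun i => rfl⟩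
  | succ N ih =>
    intro A hA h
    by_cases hs : ∀ i j, A i j = A j i
    · exact ⟨A, hs, fun i => rfl⟩
    · push_neg at hs
      obtain ⟨u0, v0, huv⟩ := hs
      have hedge : ∃ a b, A a b = true ∧ A b a = false := by
        cases hab : A u0 v0 with
        | true =>
          cases hba : A v0 u0 with
          | true => rw [hab, hba] at huv; exact absurd rfl huv
          | false => exact ⟨u0, v0, hab, hba⟩
        | false =>
          cases hba : A v0 u0 with
          | true => exact ⟨v0, u0, hba, hab⟩
          | false => rw [hab, hba] at huv; exact absurd rfl huv
      obtain ⟨a, b, hab, hba⟩ := hedge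
      obtain ⟨A', h1, h2, hlt⟩ := reduce A h a b hab hba
      obtain ⟨B, hB, hBr⟩ := ih A' (by omega) (fun i => by rw [h1 i, h2 i]; exact h i)
      exact ⟨B, hB, fun i => (hBr i).trans (h1 i)⟩

end Stmt4Aux

open Finset

/-- A sequence is bipartite graphic iff it admits a symmetric realization: a
symmetric 0-1 matrix (diagonal entries allowed to be 1) whose `i`-th row sum is
`d i` for each `i`. -/
theorem stmt_4 (n : ℕ) (d : Fin n → ℕ) :
    (∃ A : Fin n → Fin n → Bool,
        (∀ i, (univ.filter (fun j => A i j = true)).card = d i) ∧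
        (∀ j, (univ.filter (fun i => A i j = true)).card = d j))
    ↔ (∃ A : Fin n → Fin n → Bool,
        (∀ i j, A i j = A j i) ∧
        (∀ i, (univ.filter (fun j => A i j = true)).card = d i)) := by
  constructor
  · rintro ⟨A, hr, hc⟩
    have h : ∀ i, Stmt4Aux.rs A i = Stmt4Aux.cs A i := fun i => (hr i).trans (hc i).symm
    obtain ⟨B, hB, hBr⟩ := Stmt4Aux.symmetrize
      ((univ.filter (fun q : Fin n × Fin n => ¬ A q.1 q.2 = A q.2 q.1)).card) A le_rfl h
    exact ⟨B, hB, fun i => (hBr i).trans (hr i)⟩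
  · rintro ⟨A, hsymm, hrow⟩
    refine ⟨A, hrow, fun j => ?_⟩
    have heq : (univ.filter (fun i => A i j = true)) =
        (univ.filter (fun i => A j i = true)) :=
      filter_congr (fun i _ => by rw [hsymm i j])
    rw [heq]
    exact hrow j
end

section
/- If a sequence (d_1, ..., d_n) of nonnegative integers is graphic, then the sequence (d_1 + 1, d_2 + 1, ..., d_n + 1) is bipartite graphic. -/
open Finset

/-- If `(d_1, …, d_n)` is graphic (the degree sequence of a simple graph), then
`(d_1 + 1, …, d_n + 1)` is bipartite graphic. -/
theorem stmt_6 (n : ℕ) (d : Fin n → ℕ)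
    (h : ∃ adj : Fin n → Fin n → Bool,
      (∀ v w, adj v w = adj w v) ∧ (∀ v, adj v v = false) ∧
      (∀ v, (univ.filter (fun w => adj v w = true)).card = d v)) :
    ∃ A : Fin n → Fin n → Bool,
      (∀ i, (univ.filter (fun j => A i j = true)).card = d i + 1) ∧
      (∀ j, (univ.filter (fun i => A i j = true)).card = d j + 1) := by
  obtain ⟨adj, hsymm, hirr, hdeg⟩ := h
  refine ⟨fun i j => adj i j || decide (i = j), ?_, ?_⟩
  · intro i
    have hset : (univ.filter (fun j => (adj i j || decide (i = j)) = true))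
        = insert i (univ.filter (fun j => adj i j = true)) := by
      ext j
      simp only [mem_filter, mem_insert, mem_univ, true_and, Bool.or_eq_true,
        decide_eq_true_eq]
      constructor
      · rintro (h | h)
        · exact Or.inr h
        · exact Or.inl h.symm
      · rintro (rfl | h)
        · exact Or.inr rfl
        · exact Or.inl h
    rw [hset, card_insert_of_notMem (by simp [hirr i]), hdeg]
  · intro j
    have hset : (univ.filter (fun i => (adj i j || decide (i = j)) = true))
        = insert j (univ.filter (fun i => adj i j = true)) := by
      ext i
      simp only [mem_filter, mem_insert, mem_univ, true_and, Bool.or_eq_true,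
        decide_eq_true_eq]
      tauto
    rw [hset, card_insert_of_notMem (by simp [hirr j])]
    have : (univ.filter (fun i => adj i j = true))
        = (univ.filter (fun i => adj j i = true)) := by
      apply filter_congr; intro i _; simp [hsymm i j]
    rw [this, hdeg]
end

section
/- If a decreasing sequence d = (d_1, ..., d_n) of positive integers is graphic, then the sequence (d_1 - 1, d_2, ..., d_{n-1}, d_n - 1), obtained by reducing both d_1 and d_n by one, is also graphic. -/
/-!
Let `u` be a vertex of maximum degree and `w` a vertex of positive degree. If `uw` is an edge,
delete it. Otherwise pick a neighbour `b` of `w`. Since `w` is a neighbour of `b` but not of `u`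
and `deg b ≤ deg u`, some neighbour `a ≠ b` of `u` is not adjacent to `b`; replacing the edges
`ua`, `wb` by `ab` lowers the degrees of `u` and `w` by one and leaves all others unchanged.
Degrees are counted as numbers of incident edges, so that each edge operation changes them by
an indicator.
-/

open Finset

namespace Finset

variable {α : Type*} [DecidableEq α] (p : α → Prop) [DecidablePred p] {s : Finset α} {a : α}

theorem card_filter_erase_add_ite (h : a ∈ s) :
    #{x ∈ s.erase a | p x} + (if p a then 1 else 0) = #{x ∈ s | p x} := by
  rw [filter_erase]
  split_ifs with hp
  · exact card_erase_add_one (mem_filter.2 ⟨h, hp⟩)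
  · rw [erase_eq_of_notMem fun h' => hp (mem_filter.1 h').2, add_zero]

theorem card_filter_insert_of_notMem (h : a ∉ s) :
    #{x ∈ insert a s | p x} = #{x ∈ s | p x} + (if p a then 1 else 0) := by
  rw [filter_insert]
  split_ifs with hp
  · exact card_insert_of_notMem fun h' => h (mem_filter.1 h').1
  · rfl

end Finset

namespace SimpleGraph

variable {V : Type*} [Fintype V]

def IsGraphic (d : V → ℕ) : Prop :=
  ∃ (G : SimpleGraph V) (_ : DecidableRel G.Adj), ∀ v, G.degree v = d v

theorem isGraphic_iff_exists_bool_adj {d : V → ℕ} :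
    IsGraphic d ↔ ∃ adj : V → V → Bool, (∀ v w, adj v w = adj w v) ∧ (∀ v, adj v v = false) ∧
      ∀ v, #{w | adj v w = true} = d v := by
  constructor
  · rintro ⟨G, _, hG⟩
    refine ⟨fun v w => decide (G.Adj v w), fun v w => by simp [G.adj_comm], by simp, fun v => ?_⟩
    simpa [← neighborFinset_eq_filter] using hG v
  · rintro ⟨adj, hsymm, hirrefl, hdeg⟩
    let G : SimpleGraph V :=
      { Adj v w := adj v w = true
        symm := ⟨fun v w (h : adj v w = true) => hsymm v w ▸ h⟩
        loopless := ⟨fun v h => by simp [hirrefl] at h⟩ }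
    exact ⟨G, fun v w => inferInstanceAs (Decidable (adj v w = true)),
      fun v => by rw [← card_neighborFinset_eq_degree, neighborFinset_eq_filter, ← hdeg]⟩

theorem IsGraphic.lt_card {d : V → ℕ} (hd : IsGraphic d) (v : V) : d v < Fintype.card V := by
  obtain ⟨G, _, hG⟩ := hd
  exact hG v ▸ G.degree_lt_card_verts v

variable [DecidableEq V]

theorem degree_eq_card_filter_mem_edgeFinset (G : SimpleGraph V) [DecidableRel G.Adj] (v : V) :
    G.degree v = #{e ∈ G.edgeFinset | v ∈ e} := by
  rw [← card_incidenceFinset_eq_degree, incidenceFinset_eq_filter]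

theorem degree_fromEdgeSet (E : Finset (Sym2 V)) (hE : ∀ e ∈ E, ¬e.IsDiag) (v : V) :
    (fromEdgeSet (E : Set (Sym2 V))).degree v = #{e ∈ E | v ∈ e} := by
  rw [degree_eq_card_filter_mem_edgeFinset]
  congr 2
  ext e
  simp only [mem_edgeFinset, edgeSet_fromEdgeSet, Set.mem_sdiff, mem_coe, Sym2.mem_diagSet]
  exact ⟨And.left, fun he => ⟨he, hE e he⟩⟩

section

variable (G : SimpleGraph V) [DecidableRel G.Adj]

theorem isGraphic_degree_sub_of_adj {u w : V} (huw : G.Adj u w) :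
    IsGraphic fun v => G.degree v - (if v = u then 1 else 0) - (if v = w then 1 else 0) := by
  have hE : ∀ e ∈ G.edgeFinset.erase s(u, w), ¬e.IsDiag := fun e he =>
    G.not_isDiag_of_mem_edgeSet (mem_edgeFinset.1 (mem_of_mem_erase he))
  refine ⟨fromEdgeSet ↑(G.edgeFinset.erase s(u, w)), inferInstance, fun v => ?_⟩
  have hcount := card_filter_erase_add_ite (v ∈ ·) (G.mem_edgeFinset.2 huw : s(u, w) ∈ _)
  dsimp only
  rw [degree_fromEdgeSet _ hE, degree_eq_card_filter_mem_edgeFinset, ← hcount]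
  simp only [Sym2.mem_iff]
  grind [G.ne_of_adj huw]

theorem isGraphic_degree_sub_of_switch {u w a b : V} (huw : u ≠ w) (hwa : w ≠ a) (hub : u ≠ b)
    (hab : a ≠ b) (hua : G.Adj u a) (hwb : G.Adj w b) (hnab : ¬G.Adj a b) :
    IsGraphic fun v => G.degree v - (if v = u then 1 else 0) - (if v = w then 1 else 0) := by
  set E₂ := (G.edgeFinset.erase s(u, a)).erase s(w, b)
  have hE₁ : s(u, a) ∈ G.edgeFinset := G.mem_edgeFinset.2 hua
  have hE₂ : s(w, b) ∈ G.edgeFinset.erase s(u, a) :=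
    mem_erase.2 ⟨by simp [huw.symm, hwa], G.mem_edgeFinset.2 hwb⟩
  have hE₃ : s(a, b) ∉ E₂ := fun h =>
    hnab (G.mem_edgeFinset.1 (mem_of_mem_erase (mem_of_mem_erase h)))
  have hE : ∀ e ∈ insert s(a, b) E₂, ¬e.IsDiag := by
    intro e he
    rcases mem_insert.1 he with rfl | he
    · exact Sym2.mk_isDiag_iff.not.2 hab
    · exact G.not_isDiag_of_mem_edgeSet (mem_edgeFinset.1 (mem_of_mem_erase (mem_of_mem_erase he)))
  refine ⟨fromEdgeSet ↑(insert s(a, b) E₂), inferInstance, fun v => ?_⟩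
  have h₁ := card_filter_erase_add_ite (v ∈ ·) hE₁
  have h₂ := card_filter_erase_add_ite (v ∈ ·) hE₂
  have h₃ := card_filter_insert_of_notMem (v ∈ ·) hE₃
  dsimp only
  rw [degree_fromEdgeSet _ hE, h₃, degree_eq_card_filter_mem_edgeFinset, ← h₁, ← h₂]
  simp only [Sym2.mem_iff]
  grind [G.ne_of_adj hua, G.ne_of_adj hwb]

theorem exists_adj_not_adj_of_degree_le {u w b : V} (huw : u ≠ w) (hnadj : ¬G.Adj u w)
    (hwb : G.Adj w b) (hb : G.degree b ≤ G.degree u) :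
    ∃ a, G.Adj u a ∧ a ≠ b ∧ ¬G.Adj a b := by
  by_contra! h
  -- the inclusion forces `deg u < deg b`
  have hsub : insert w ((G.neighborFinset u).erase b) ⊆ (G.neighborFinset b).erase u := by
    intro x hx
    rcases mem_insert.1 hx with rfl | hx
    · exact mem_erase.2 ⟨huw.symm, (mem_neighborFinset _ _ _).2 hwb.symm⟩
    · obtain ⟨hxb, hux⟩ := mem_erase.1 hx
      rw [mem_neighborFinset] at hux
      exact mem_erase.2 ⟨hux.ne.symm, (mem_neighborFinset _ _ _).2 (h x hux hxb).symm⟩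
  have hw : w ∉ (G.neighborFinset u).erase b := fun h' =>
    hnadj ((mem_neighborFinset _ _ _).1 (mem_erase.1 h').2)
  have hcard := card_le_card hsub
  simp only [card_insert_of_notMem hw, card_erase_eq_ite, card_neighborFinset_eq_degree,
    mem_neighborFinset, G.adj_comm b u] at hcard
  split_ifs at hcard <;> omega

end

theorem IsGraphic.sub_sub_of_forall_le {d : V → ℕ} (hd : IsGraphic d) {u w : V} (huw : u ≠ w)
    (hu : ∀ x, d x ≤ d u) (hw : 0 < d w) :
    IsGraphic fun v => d v - (if v = u then 1 else 0) - (if v = w then 1 else 0) := by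
  obtain ⟨G, _, hG⟩ := hd
  simp only [← hG] at hu hw ⊢
  by_cases huw' : G.Adj u w
  · exact G.isGraphic_degree_sub_of_adj huw'
  obtain ⟨b, hwb⟩ := (G.degree_pos_iff_exists_adj w).1 hw
  obtain ⟨a, hua, hab, hnab⟩ := G.exists_adj_not_adj_of_degree_le huw huw' hwb (hu b)
  exact G.isGraphic_degree_sub_of_switch huw (fun h => huw' (h ▸ hua)) (fun h => huw' (h ▸ hwb.symm))
    hab hua hwb hnab

end SimpleGraph

open SimpleGraph

/-- If a decreasing sequence `d` of positive integers is graphic, then the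
sequence obtained by reducing both `d_1` and `d_n` by one is also graphic. -/
theorem stmt_7 (n : ℕ) (d : Fin n → ℕ) (hd : Antitone d) (hpos : ∀ i, 1 ≤ d i)
    (h : ∃ adj : Fin n → Fin n → Bool,
      (∀ v w, adj v w = adj w v) ∧ (∀ v, adj v v = false) ∧
      (∀ v, (univ.filter (fun w => adj v w = true)).card = d v)) :
    ∃ adj : Fin n → Fin n → Bool,
      (∀ v w, adj v w = adj w v) ∧ (∀ v, adj v v = false) ∧
      (∀ v, (univ.filter (fun w => adj v w = true)).card
        = d v - (if (v : ℕ) = 0 then 1 else 0) - (if (v : ℕ) = n - 1 then 1 else 0)) := by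
  rw [← isGraphic_iff_exists_bool_adj] at h ⊢
  rcases n with _ | _ | n
  · exact ⟨⊥, inferInstance, fun v => v.elim0⟩
  · exact ((h.lt_card 0).not_ge (by simpa using hpos 0)).elim
  · have hne : (0 : Fin (n + 2)) ≠ Fin.last (n + 1) := by simp [Fin.ext_iff]
    convert h.sub_sub_of_forall_le hne (fun x => hd (Fin.zero_le x)) (hpos _) using 4
    · simp only [Fin.ext_iff, Fin.val_zero]
    · simp [Fin.ext_iff]
end

section
/- If a decreasing sequence d = (d_1, ..., d_n) of positive integers is bipartite graphic, then the sequence (d_1 - 1, d_2, ..., d_{n-1}, d_n - 1), obtained by reducing both d_1 and d_n by one, is also bipartite graphic. -/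
open Finset

private def Rz {n : ℕ} (d : Fin n → ℕ) (A : Fin n → Fin n → Bool) : Prop :=
  (∀ i, (univ.filter (fun j => A i j = true)).card = d i) ∧
  (∀ j, (univ.filter (fun i => A i j = true)).card = d j)

private lemma card_swap_aux {n : ℕ} {f g : Fin n → Bool} {j1 j2 : Fin n} (hj : j1 ≠ j2)
    (hf1 : f j1 = true) (hf2 : f j2 = false) (hg1 : g j1 = false) (hg2 : g j2 = true)
    (hsame : ∀ j, j ≠ j1 → j ≠ j2 → g j = f j) :
    (univ.filter (fun j => g j = true)).card = (univ.filter (fun j => f j = true)).card := by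
  have hset : univ.filter (fun j => g j = true)
      = insert j2 ((univ.filter (fun j => f j = true)).erase j1) := by
    ext j
    simp only [mem_insert, mem_erase, mem_filter, mem_univ, true_and]
    by_cases h1 : j = j1
    · subst h1
      simp [hg1, hj, hf2]
    · by_cases h2 : j = j2
      · subst h2
        simp [hg2]
      · rw [hsame j h1 h2]
        simp [h1, h2]
  have hmem : j1 ∈ univ.filter (fun j => f j = true) := by simp [hf1]
  have hpos : 0 < (univ.filter (fun j => f j = true)).card := card_pos.2 ⟨j1, hmem⟩
  rw [hset, card_insert_of_notMem (by simp [hf2]), card_erase_of_mem hmem]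
  omega

private lemma card_del_aux {n : ℕ} {f g : Fin n → Bool} {j1 : Fin n}
    (hf : f j1 = true) (hg : g j1 = false) (hsame : ∀ j, j ≠ j1 → g j = f j) :
    (univ.filter (fun j => g j = true)).card = (univ.filter (fun j => f j = true)).card - 1 := by
  have hset : univ.filter (fun j => g j = true)
      = (univ.filter (fun j => f j = true)).erase j1 := by
    ext j
    simp only [mem_erase, mem_filter, mem_univ, true_and]
    by_cases h1 : j = j1
    · subst h1; simp [hg]
    · rw [hsame j h1]; simp [h1]
  rw [hset, card_erase_of_mem (by simp [hf])]

private lemma card_same_aux {n : ℕ} {f g : Fin n → Bool}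
    (hsame : ∀ j, g j = f j) :
    (univ.filter (fun j => g j = true)).card = (univ.filter (fun j => f j = true)).card := by
  congr 1
  apply filter_congr
  intro j _
  rw [hsame j]

private lemma swap_realizes {n : ℕ} {d : Fin n → ℕ} {A : Fin n → Fin n → Bool}
    (hA : Rz d A) {i1 i2 j1 j2 : Fin n} (hi : i1 ≠ i2) (hj : j1 ≠ j2)
    (h11 : A i1 j1 = true) (h22 : A i2 j2 = true)
    (h12 : A i1 j2 = false) (h21 : A i2 j1 = false) :
    Rz d (fun i j => if i = i1 ∧ j = j1 then false else if i = i2 ∧ j = j2 then false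
      else if i = i1 ∧ j = j2 then true else if i = i2 ∧ j = j1 then true else A i j) := by
  set B : Fin n → Fin n → Bool := fun i j =>
    if i = i1 ∧ j = j1 then false else if i = i2 ∧ j = j2 then false
      else if i = i1 ∧ j = j2 then true else if i = i2 ∧ j = j1 then true else A i j with hBdef
  constructor
  · intro i
    by_cases hI1 : i = i1
    · subst hI1
      rw [← hA.1 i]
      exact card_swap_aux (f := fun j => A i j) (g := fun j => B i j) hj h11 h12
        (by simp [hBdef]) (by simp [hBdef, hj.symm, hi])
        (fun j hj1 hj2 => by simp [hBdef, hj1, hj2, hi])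
    · by_cases hI2 : i = i2
      · subst hI2
        rw [← hA.1 i]
        exact card_swap_aux (f := fun j => A i j) (g := fun j => B i j) hj.symm h22 h21
          (by simp [hBdef, hi.symm]) (by simp [hBdef, hj, hi.symm])
          (fun j hj1 hj2 => by simp [hBdef, hj1, hj2, hi.symm])
      · rw [← hA.1 i]
        exact card_same_aux (fun j => by simp [hBdef, hI1, hI2])
  · intro j
    by_cases hJ1 : j = j1
    · subst hJ1
      rw [← hA.2 j]
      exact card_swap_aux (f := fun i => A i j) (g := fun i => B i j) hi h11 h21
        (by simp [hBdef]) (by simp [hBdef, hi.symm, hj])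
        (fun i hi1 hi2 => by simp [hBdef, hi1, hi2, hj.symm])
    · by_cases hJ2 : j = j2
      · subst hJ2
        rw [← hA.2 j]
        exact card_swap_aux (f := fun i => A i j) (g := fun i => B i j) hi.symm h22 h12
          (by simp [hBdef, hj.symm]) (by simp [hBdef, hi, hj.symm])
          (fun i hi1 hi2 => by simp [hBdef, hi1, hi2, hj.symm])
      · rw [← hA.2 j]
        exact card_same_aux (fun i => by simp [hBdef, hJ1, hJ2])

private lemma exists_good {n : ℕ} (d : Fin n → ℕ) (hd : Antitone d)
    (hpos : ∀ i, 1 ≤ d i) {A : Fin n → Fin n → Bool} (hA : Rz d A)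
    {z m : Fin n} (hz : (z : ℕ) = 0) (hzm : z ≠ m) :
    ∃ B, Rz d B ∧ B z m = true ∧ B m z = true := by
  have hzle : ∀ i : Fin n, z ≤ i := fun i => by
    rw [Fin.le_def, hz]; exact Nat.zero_le _
  -- Step 1: get B with B z m = true
  obtain ⟨B, hB, hBzm⟩ : ∃ B, Rz d B ∧ B z m = true := by
    by_cases h0 : A z m = true
    · exact ⟨A, hA, h0⟩
    · have h0' : A z m = false := by simpa using h0
      by_cases hall : ∀ r c, A r m = true → A z c = true → A r c = true
      · exfalso
        obtain ⟨r, hr⟩ : ∃ r, A r m = true := by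
          have hc := hA.2 m
          have hp := hpos m
          have : (univ.filter (fun i => A i m = true)).Nonempty := card_pos.1 (by omega)
          obtain ⟨r, hrmem⟩ := this
          exact ⟨r, (mem_filter.1 hrmem).2⟩
        have hsub : insert m (univ.filter (fun c => A z c = true))
            ⊆ univ.filter (fun c => A r c = true) := by
          intro c hc
          simp only [mem_insert, mem_filter, mem_univ, true_and] at hc ⊢
          rcases hc with rfl | hc
          · exact hr
          · exact hall r c hr hc
        have hcard := card_le_card hsub
        rw [card_insert_of_notMem (by simp [h0']), hA.1 z, hA.1 r] at hcard
        have : d r ≤ d z := hd (hzle r)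
        omega
      · push_neg at hall
        obtain ⟨r, c, hrm, hzc, hrc⟩ := hall
        have hrc' : A r c = false := by simpa using hrc
        have hrz : z ≠ r := by
          rintro rfl; rw [hrm] at h0'; exact absurd h0' (by simp)
        have hcm : c ≠ m := by
          rintro rfl; rw [hzc] at h0'; exact absurd h0' (by simp)
        refine ⟨_, swap_realizes hA hrz hcm hzc hrm h0' hrc', ?_⟩
        simp [hcm.symm, hrz]
  -- Step 2: get C with C z m = true and C m z = true
  by_cases h0 : B m z = true
  · exact ⟨B, hB, hBzm, h0⟩
  · have h0' : B m z = false := by simpa using h0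
    by_cases hall : ∀ r c, B r z = true → B m c = true → B r c = true
    · exfalso
      obtain ⟨c0, hc0⟩ : ∃ c0, B m c0 = true := by
        have hc := hB.1 m
        have hp := hpos m
        have : (univ.filter (fun j => B m j = true)).Nonempty := card_pos.1 (by omega)
        obtain ⟨c0, hmem⟩ := this
        exact ⟨c0, (mem_filter.1 hmem).2⟩
      have hsub : insert m (univ.filter (fun r => B r z = true))
          ⊆ univ.filter (fun r => B r c0 = true) := by
        intro r hrmem
        simp only [mem_insert, mem_filter, mem_univ, true_and] at hrmem ⊢
        rcases hrmem with rfl | hrmem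
        · exact hc0
        · exact hall r c0 hrmem hc0
      have hcard := card_le_card hsub
      rw [card_insert_of_notMem (by simp [h0']), hB.2 z, hB.2 c0] at hcard
      have : d c0 ≤ d z := hd (hzle c0)
      omega
    · push_neg at hall
      obtain ⟨r, c, hrz, hmc, hrc⟩ := hall
      have hrc' : B r c = false := by simpa using hrc
      have hrm : r ≠ m := by
        rintro rfl; rw [hrz] at h0'; exact absurd h0' (by simp)
      have hcz : z ≠ c := by
        rintro rfl; rw [hmc] at h0'; exact absurd h0' (by simp)
      have hB' := swap_realizes hB hrm hcz hrz hmc hrc' h0'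
      refine ⟨_, hB', ?_, ?_⟩
      · have hnot3 : ¬(z = r ∧ m = c) := by
          rintro ⟨rfl, rfl⟩; rw [hBzm] at hrc'; simp at hrc'
        simpa [hzm, Ne.symm hzm, hnot3] using hBzm
      · simp [Ne.symm hrm, hcz]

/-- If a decreasing sequence `d` of positive integers is bipartite graphic, then
the sequence obtained by reducing both `d_1` and `d_n` by one is also bipartite
graphic. -/
theorem stmt_8 (n : ℕ) (d : Fin n → ℕ) (hd : Antitone d) (hpos : ∀ i, 1 ≤ d i)
    (h : ∃ A : Fin n → Fin n → Bool,
      (∀ i, (univ.filter (fun j => A i j = true)).card = d i) ∧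
      (∀ j, (univ.filter (fun i => A i j = true)).card = d j)) :
    ∃ A : Fin n → Fin n → Bool,
      (∀ i, (univ.filter (fun j => A i j = true)).card
        = d i - (if (i : ℕ) = 0 then 1 else 0) - (if (i : ℕ) = n - 1 then 1 else 0)) ∧
      (∀ j, (univ.filter (fun i => A i j = true)).card
        = d j - (if (j : ℕ) = 0 then 1 else 0) - (if (j : ℕ) = n - 1 then 1 else 0)) := by
  rcases Nat.lt_or_ge n 2 with hn | hn
  · interval_cases n
    · exact ⟨fun _ _ => false, fun i => i.elim0, fun j => j.elim0⟩
    · obtain ⟨A, h1, h2⟩ := h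
      have hle : ∀ i : Fin 1, d i ≤ 1 := fun i => by
        rw [← h1 i]
        exact (card_filter_le _ _).trans (by simp)
      refine ⟨fun _ _ => false, fun i => ?_, fun j => ?_⟩
      · have hi0 : (i : ℕ) = 0 := by omega
        have := hle i
        simp [hi0]
        omega
      · have hj0 : (j : ℕ) = 0 := by omega
        have := hle j
        simp [hj0]
        omega
  · obtain ⟨z, hz⟩ : ∃ z : Fin n, (z : ℕ) = 0 := ⟨⟨0, by omega⟩, rfl⟩
    obtain ⟨m, hm⟩ : ∃ m : Fin n, (m : ℕ) = n - 1 := ⟨⟨n - 1, by omega⟩, rfl⟩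
    have hzm : z ≠ m := fun hh => by rw [hh] at hz; omega
    have hmz : m ≠ z := hzm.symm
    obtain ⟨A, h1, h2⟩ := h
    obtain ⟨B, hB, hBzm, hBmz⟩ := exists_good d hd hpos ⟨h1, h2⟩ hz hzm
    refine ⟨fun i j => if (i = z ∧ j = m) ∨ (i = m ∧ j = z) then false else B i j,
      fun i => ?_, fun j => ?_⟩
    · by_cases hiz : i = z
      · have e1 : (i : ℕ) = 0 := by rw [hiz, hz]
        have e2 : ¬((i : ℕ) = n - 1) := by rw [hiz, hz]; omega
        rw [if_pos e1, if_neg e2, Nat.sub_zero, ← hB.1 i]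
        have him : i ≠ m := by rw [hiz]; exact hzm
        exact card_del_aux (f := fun j => B i j) (j1 := m)
          (by rw [hiz]; exact hBzm) (by simp [hiz]) (fun j hjm => by simp [hjm, him])
      · by_cases him : i = m
        · have e1 : ¬((i : ℕ) = 0) := by rw [him, hm]; omega
          have e2 : (i : ℕ) = n - 1 := by rw [him, hm]
          rw [if_neg e1, if_pos e2, Nat.sub_zero, ← hB.1 i]
          exact card_del_aux (f := fun j => B i j) (j1 := z)
            (by rw [him]; exact hBmz) (by simp [him]) (fun j hjz => by simp [hjz, hiz])
        · have e1 : ¬((i : ℕ) = 0) := fun hh => hiz (Fin.ext (by omega))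
          have e2 : ¬((i : ℕ) = n - 1) := fun hh => him (Fin.ext (by omega))
          rw [if_neg e1, if_neg e2, Nat.sub_zero, Nat.sub_zero, ← hB.1 i]
          exact card_same_aux (fun j => by simp [hiz, him])
    · by_cases hjz : j = z
      · have e1 : (j : ℕ) = 0 := by rw [hjz, hz]
        have e2 : ¬((j : ℕ) = n - 1) := by rw [hjz, hz]; omega
        rw [if_pos e1, if_neg e2, Nat.sub_zero, ← hB.2 j]
        exact card_del_aux (f := fun r => B r j) (j1 := m)
          (by rw [hjz]; exact hBmz) (by simp [hjz, hzm]) (fun r hrm => by simp [hrm, hjz, hzm])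
      · by_cases hjm : j = m
        · have e1 : ¬((j : ℕ) = 0) := by rw [hjm, hm]; omega
          have e2 : (j : ℕ) = n - 1 := by rw [hjm, hm]
          rw [if_neg e1, if_pos e2, Nat.sub_zero, ← hB.2 j]
          exact card_del_aux (f := fun r => B r j) (j1 := z)
            (by rw [hjm]; exact hBzm) (by simp [hjm, hmz]) (fun r hrz => by simp [hrz, hjm, hmz])
        · have e1 : ¬((j : ℕ) = 0) := fun hh => hjz (Fin.ext (by omega))
          have e2 : ¬((j : ℕ) = n - 1) := fun hh => hjm (Fin.ext (by omega))
          rw [if_neg e1, if_neg e2, Nat.sub_zero, Nat.sub_zero, ← hB.2 j]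
          exact card_same_aux (fun r => by simp [hjz, hjm])
end

section
/- Let d = (d_1, ..., d_n) be the sequence of vertex degrees (with each loop counted twice) of a graph-with-loops on n vertices, listed in decreasing order. Then the sum d_1 + ... + d_n is even and, for each integer k with 1 ≤ k ≤ n, ∑_{i=1}^k d_i ≤ k(k+1) + ∑_{i=k+1}^n min{k, d_i}. -/
open Finset

/-!
Evenness is the handshake lemma: the non-loop edges form a simple graph, and each loop adds 2.
For the inequality, split the degree of a vertex of a `k`-element vertex set `A` into
its neighbours inside `A` (at most `k - 1`, plus 2 for a loop) and its neighbours outside `A`.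
Counting the edges between `A` and its complement from the other side, a vertex `w ∉ A`
contributes at most `min #A (deg w)` of them.
-/

namespace LoopGraph

variable {V : Type*} [Fintype V] [DecidableEq V] (adj : V → V → Bool)

def degree (v : V) : ℕ :=
  #{w | w ≠ v ∧ adj v w = true} + if adj v v = true then 2 else 0

theorem even_sum_degree (hsymm : ∀ v w, adj v w = adj w v) : Even (∑ v, degree adj v) := by
  let G := SimpleGraph.fromRel fun v w => adj v w = true
  have hG : ∀ v, G.degree v = #{w | w ≠ v ∧ adj v w = true} := fun v => by
    rw [← G.card_neighborFinset_eq_degree]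
    congr 1
    ext w
    simp only [G, SimpleGraph.mem_neighborFinset, SimpleGraph.fromRel_adj, mem_filter, mem_univ,
      true_and, hsymm w v, or_self, ne_comm]
  simp only [degree, sum_add_distrib, ← hG, G.sum_degrees_eq_twice_card_edges]
  exact (even_two_mul _).add (even_sum _ fun v _ => by split <;> simp)

variable {adj}

theorem degree_le_of_mem {A : Finset V} {v : V} (hv : v ∈ A) :
    degree adj v ≤ #A + 1 + #{w ∈ Aᶜ | adj v w = true} := by
  have hsplit : ({w | w ≠ v ∧ adj v w = true} : Finset V) ⊆
      A.erase v ∪ {w ∈ Aᶜ | adj v w = true} := by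
    intro w
    by_cases hw : w ∈ A <;> simp_all
  have hloop : (if adj v v = true then 2 else 0) ≤ 2 := by split <;> omega
  have hA : #(A.erase v) + 1 = #A := card_erase_add_one hv
  have := (card_le_card hsplit).trans (card_union_le _ _)
  unfold degree
  omega

theorem card_filter_adj_le_degree (hsymm : ∀ v w, adj v w = adj w v) {A : Finset V} {w : V}
    (hw : w ∉ A) : #{v ∈ A | adj v w = true} ≤ degree adj w := by
  have hsub : {v ∈ A | adj v w = true} ⊆ ({v | v ≠ w ∧ adj w v = true} : Finset V) := by
    intro v hv
    simp only [mem_filter, mem_univ, true_and] at hv ⊢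
    exact ⟨by rintro rfl; exact hw hv.1, hsymm w v ▸ hv.2⟩
  exact (card_le_card hsub).trans (Nat.le_add_right _ _)

theorem sum_degree_le (hsymm : ∀ v w, adj v w = adj w v) (A : Finset V) :
    ∑ v ∈ A, degree adj v ≤ #A * (#A + 1) + ∑ w ∈ Aᶜ, min #A (degree adj w) :=
  calc ∑ v ∈ A, degree adj v
      ≤ ∑ v ∈ A, (#A + 1 + #{w ∈ Aᶜ | adj v w = true}) :=
        sum_le_sum fun v hv => degree_le_of_mem hv
    _ = #A * (#A + 1) + ∑ w ∈ Aᶜ, #{v ∈ A | adj v w = true} := by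
        rw [sum_add_distrib, sum_const, smul_eq_mul]
        congr 1
        exact sum_card_bipartiteAbove_eq_sum_card_bipartiteBelow _
    _ ≤ #A * (#A + 1) + ∑ w ∈ Aᶜ, min #A (degree adj w) := by
        gcongr with w hw
        exact le_min (card_filter_le _ _) (card_filter_adj_le_degree hsymm (mem_compl.1 hw))

end LoopGraph

theorem stmt_10_general (n : ℕ) (d : Fin n → ℕ)
    (adj : Fin n → Fin n → Bool) (hsymm : ∀ v w, adj v w = adj w v)
    (hdeg : ∀ v, ((univ.filter (fun w => w ≠ v ∧ adj v w = true)).card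
              + (if adj v v = true then 2 else 0)) = d v) :
    Even (∑ i, d i) ∧
      ∀ k : ℕ, 1 ≤ k → k ≤ n →
        ∑ i ∈ univ.filter (fun i : Fin n => (i : ℕ) < k), d i
          ≤ k * (k + 1)
            + ∑ i ∈ univ.filter (fun i : Fin n => k ≤ (i : ℕ)), min k (d i) := by
  obtain rfl : d = LoopGraph.degree adj := funext fun v => (hdeg v).symm
  refine ⟨LoopGraph.even_sum_degree adj hsymm, fun k _ hkn => ?_⟩
  let A : Finset (Fin n) := {i | (i : ℕ) < k}
  have hcard : #A = k := by rw [Fin.card_filter_val_lt, min_eq_right hkn]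
  have hcompl : Aᶜ = ({i | k ≤ (i : ℕ)} : Finset (Fin n)) := by
    ext i
    simp [A]
  simpa only [hcard, hcompl] using LoopGraph.sum_degree_le hsymm A

/-- Necessity in the Erdős–Gallai type theorem for graphs-with-loops, with loops
counted twice: if a decreasing sequence `d` is the degree sequence of a
graph-with-loops, then its sum is even and
`∑_{i=1}^k d_i ≤ k(k+1) + ∑_{i=k+1}^n min{k, d_i}` for all `1 ≤ k ≤ n`. -/
theorem stmt_10 (n : ℕ) (d : Fin n → ℕ) (hd : Antitone d)
    (adj : Fin n → Fin n → Bool) (hsymm : ∀ v w, adj v w = adj w v)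
    (hdeg : ∀ v, ((univ.filter (fun w => w ≠ v ∧ adj v w = true)).card
              + (if adj v v = true then 2 else 0)) = d v) :
    Even (∑ i, d i) ∧
      ∀ k : ℕ, 1 ≤ k → k ≤ n →
        ∑ i ∈ univ.filter (fun i : Fin n => (i : ℕ) < k), d i
          ≤ k * (k + 1)
            + ∑ i ∈ univ.filter (fun i : Fin n => k ≤ (i : ℕ)), min k (d i) :=
  stmt_10_general n d adj hsymm hdeg
end

section
/- Let d = (d_1, ..., d_n) be the sequence of reduced degrees of the vertices of a graph-with-loops on n vertices, listed in decreasing order. Then, for each integer k with 1 ≤ k ≤ n, ∑_{i=1}^k d_i ≤ k^2 + ∑_{i=k+1}^n min{k, d_i}. -/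
open Finset

/-- Necessity in the Erdős–Gallai type theorem for reduced degrees: if a
decreasing sequence `d` is the reduced degree sequence of a graph-with-loops,
then `∑_{i=1}^k d_i ≤ k² + ∑_{i=k+1}^n min{k, d_i}` for all `1 ≤ k ≤ n`. -/
theorem stmt_11 (n : ℕ) (d : Fin n → ℕ) (hd : Antitone d)
    (adj : Fin n → Fin n → Bool) (hsymm : ∀ v w, adj v w = adj w v)
    (hdeg : ∀ v, (univ.filter (fun w => adj v w = true)).card = d v) :
    ∀ k : ℕ, 1 ≤ k → k ≤ n →
      ∑ i ∈ univ.filter (fun i : Fin n => (i : ℕ) < k), d i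
        ≤ k ^ 2 + ∑ i ∈ univ.filter (fun i : Fin n => k ≤ (i : ℕ)), min k (d i) := by
  intro k hk hkn
  set S := univ.filter (fun i : Fin n => (i : ℕ) < k) with hSdef
  set T := univ.filter (fun i : Fin n => k ≤ (i : ℕ)) with hTdef
  have hST : S ∪ T = univ := by
    ext i; simp [hSdef, hTdef, lt_or_ge]
  have hdisj : Disjoint S T := by
    rw [Finset.disjoint_left]
    intro i hiS hiT
    simp only [hSdef, hTdef, Finset.mem_filter] at hiS hiT
    omega
  have hScard : S.card = k := by
    have himg : S.image (fun i : Fin n => (i : ℕ)) = Finset.range k := by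
      ext j
      simp only [hSdef, Finset.mem_image, Finset.mem_filter, Finset.mem_univ, true_and,
        Finset.mem_range]
      constructor
      · rintro ⟨a, h1, rfl⟩; exact h1
      · intro hj; exact ⟨⟨j, lt_of_lt_of_le hj hkn⟩, hj, rfl⟩
    rw [← Finset.card_range k, ← himg]
    exact (Finset.card_image_of_injective _ Fin.val_injective).symm
  -- split each degree
  have hsplit : ∀ v : Fin n, d v =
      (S.filter (fun w => adj v w = true)).card + (T.filter (fun w => adj v w = true)).card := by
    intro v
    rw [← hdeg v, ← Finset.card_union_of_disjoint
      (Finset.disjoint_filter_filter hdisj), ← Finset.filter_union, hST]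
  calc ∑ i ∈ S, d i
      = ∑ v ∈ S, ((S.filter (fun w => adj v w = true)).card
          + (T.filter (fun w => adj v w = true)).card) := by
        exact Finset.sum_congr rfl (fun v _ => hsplit v)
    _ = ∑ v ∈ S, (S.filter (fun w => adj v w = true)).card
          + ∑ v ∈ S, (T.filter (fun w => adj v w = true)).card := Finset.sum_add_distrib
    _ ≤ k ^ 2 + ∑ w ∈ T, min k (d w) := by
        gcongr ?_ + ?_
        · calc ∑ v ∈ S, (S.filter (fun w => adj v w = true)).card
              ≤ ∑ _v ∈ S, S.card :=
                Finset.sum_le_sum (fun v _ => Finset.card_filter_le _ _)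
            _ = k ^ 2 := by rw [Finset.sum_const, hScard, smul_eq_mul, sq]
        · calc ∑ v ∈ S, (T.filter (fun w => adj v w = true)).card
              = ∑ v ∈ S, ∑ w ∈ T, (if adj v w = true then 1 else 0) := by
                refine Finset.sum_congr rfl (fun v _ => ?_)
                rw [Finset.card_filter]
            _ = ∑ w ∈ T, ∑ v ∈ S, (if adj v w = true then 1 else 0) := Finset.sum_comm
            _ = ∑ w ∈ T, (S.filter (fun v => adj v w = true)).card := by
                refine Finset.sum_congr rfl (fun w _ => ?_)
                rw [Finset.card_filter]
            _ ≤ ∑ w ∈ T, min k (d w) := by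
                refine Finset.sum_le_sum (fun w _ => ?_)
                refine le_min ?_ ?_
                · exact hScard ▸ Finset.card_filter_le _ _
                · rw [← hdeg w]
                  apply Finset.card_le_card
                  intro v hv
                  simp only [Finset.mem_filter, hSdef] at hv ⊢
                  exact ⟨Finset.mem_univ v, by rw [hsymm]; exact hv.2⟩
end

section
/- If a decreasing sequence d = (d_1, ..., d_n) of nonnegative integers is bipartite graphic, then for each integer k with 1 ≤ k ≤ n, ∑_{i=1}^k d_i ≤ k^2 + ∑_{i=k+1}^n min{k, d_i}. -/
open Finset

/-- If a decreasing sequence `d` of nonnegative integers is bipartite graphic,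
then `∑_{i=1}^k d_i ≤ k² + ∑_{i=k+1}^n min{k, d_i}` for all `1 ≤ k ≤ n`. -/
theorem stmt_12 (n : ℕ) (d : Fin n → ℕ) (hd : Antitone d)
    (h : ∃ A : Fin n → Fin n → Bool,
      (∀ i, (univ.filter (fun j => A i j = true)).card = d i) ∧
      (∀ j, (univ.filter (fun i => A i j = true)).card = d j)) :
    ∀ k : ℕ, 1 ≤ k → k ≤ n →
      ∑ i ∈ univ.filter (fun i : Fin n => (i : ℕ) < k), d i
        ≤ k ^ 2 + ∑ i ∈ univ.filter (fun i : Fin n => k ≤ (i : ℕ)), min k (d i) := by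
  obtain ⟨A, hrow, hcol⟩ := h
  intro k hk1 hkn
  set S : Finset (Fin n) := univ.filter (fun i : Fin n => (i : ℕ) < k) with hSdef
  set T : Finset (Fin n) := univ.filter (fun i : Fin n => k ≤ (i : ℕ)) with hTdef
  set f : Fin n → Fin n → ℕ := fun i j => if A i j = true then 1 else 0 with hfdef
  have hf1 : ∀ i j, f i j ≤ 1 := by
    intro i j; simp only [hfdef]; split <;> simp
  have hScard : S.card ≤ k := by
    have : S.card ≤ (Finset.range k).card := by
      refine Finset.card_le_card_of_injOn (fun i => (i : ℕ)) ?_ ?_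
      · intro i hi
        simp only [hSdef, mem_filter, mem_univ, true_and] at hi
        simpa using hi
      · intro a _ b _ hab
        exact Fin.ext hab
    simpa using this
  have hrow' : ∀ i, ∑ j, f i j = d i := by
    intro i
    rw [← hrow i, Finset.card_filter]
  have hcol' : ∀ j, ∑ i, f i j = d j := by
    intro j
    rw [← hcol j, Finset.card_filter]
  have hsplit : ∀ i, ∑ j, f i j = ∑ j ∈ S, f i j + ∑ j ∈ T, f i j := by
    intro i
    have := Finset.sum_filter_add_sum_filter_not univ
      (fun j : Fin n => (j : ℕ) < k) (f i)
    rw [← this]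
    congr 1
    apply Finset.sum_congr _ (fun _ _ => rfl)
    simp [hTdef, not_lt]
  calc ∑ i ∈ S, d i = ∑ i ∈ S, (∑ j ∈ S, f i j + ∑ j ∈ T, f i j) := by
        apply Finset.sum_congr rfl
        intro i _
        rw [← hsplit, hrow']
    _ = ∑ i ∈ S, ∑ j ∈ S, f i j + ∑ i ∈ S, ∑ j ∈ T, f i j := by
        rw [Finset.sum_add_distrib]
    _ ≤ k ^ 2 + ∑ j ∈ T, min k (d j) := by
        gcongr ?_ + ?_
        · calc ∑ i ∈ S, ∑ j ∈ S, f i j ≤ ∑ i ∈ S, S.card := by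
                apply Finset.sum_le_sum
                intro i _
                calc ∑ j ∈ S, f i j ≤ ∑ j ∈ S, 1 :=
                      Finset.sum_le_sum (fun j _ => hf1 i j)
                  _ = S.card := by simp
            _ = S.card * S.card := by simp [mul_comm]
            _ ≤ k * k := Nat.mul_le_mul hScard hScard
            _ = k ^ 2 := (sq k).symm
        · rw [Finset.sum_comm]
          apply Finset.sum_le_sum
          intro j _
          apply le_min
          · calc ∑ i ∈ S, f i j ≤ ∑ i ∈ S, 1 :=
                  Finset.sum_le_sum (fun i _ => hf1 i j)
              _ = S.card := by simp
              _ ≤ k := hScard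
          · calc ∑ i ∈ S, f i j ≤ ∑ i, f i j :=
                  Finset.sum_le_sum_of_subset (Finset.subset_univ S)
              _ = d j := hcol' j
end

section
/- If a decreasing sequence d = (d_1, ..., d_n) of positive integers satisfies, for each integer k with 1 ≤ k ≤ n, the inequality ∑_{i=1}^k d_i ≤ k^2 + ∑_{i=k+1}^n min{k, d_i}, then the decreasing rearrangement of the sequence obtained from d by reducing both d_1 and d_n by one also satisfies these inequalities (with d replaced by the new sequence). -/
open Finset

lemma bridge1 {n : ℕ} (f : Fin n → ℕ) (F : ℕ → ℕ)
    (hF : ∀ (j : ℕ) (hj : j < n), F j = f ⟨j, hj⟩) (k : ℕ) (hk : k ≤ n) :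
    ∑ i ∈ univ.filter (fun i : Fin n => (i : ℕ) < k), f i = ∑ j ∈ range k, F j := by
  rw [Finset.sum_filter]
  have h1 : ∀ i : Fin n, (if (i : ℕ) < k then f i else 0)
      = (fun j => if j < k then F j else 0) (i : ℕ) := by
    intro i
    simp only [hF i i.isLt]
  rw [Finset.sum_congr rfl (fun i _ => h1 i),
    Fin.sum_univ_eq_sum_range (fun j => if j < k then F j else 0) n,
    ← Finset.sum_filter]
  apply Finset.sum_congr _ (fun _ _ => rfl)
  ext j
  simp only [mem_filter, mem_range]
  omega

lemma bridge2 {n : ℕ} (f : Fin n → ℕ) (F : ℕ → ℕ)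
    (hF : ∀ (j : ℕ) (hj : j < n), F j = f ⟨j, hj⟩) (k : ℕ) :
    ∑ i ∈ univ.filter (fun i : Fin n => k ≤ (i : ℕ)), min k (f i)
      = ∑ j ∈ Ico k n, min k (F j) := by
  rw [Finset.sum_filter]
  have h1 : ∀ i : Fin n, (if k ≤ (i : ℕ) then min k (f i) else 0)
      = (fun j => if k ≤ j then min k (F j) else 0) (i : ℕ) := by
    intro i
    simp only [hF i i.isLt]
  rw [Finset.sum_congr rfl (fun i _ => h1 i),
    Fin.sum_univ_eq_sum_range (fun j => if k ≤ j then min k (F j) else 0) n,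
    ← Finset.sum_filter]
  apply Finset.sum_congr _ (fun _ _ => rfl)
  ext j
  simp only [mem_filter, mem_range, mem_Ico]
  omega

lemma arith1 (k j0 D S : ℕ) (h1 : k ≤ j0) (h2 : D ≤ j0) (h3 : 1 ≤ S) :
    k * D ≤ k ^ 2 + ((j0 - k) * k + (S - 1)) := by
  zify [h1, h3]
  have h2' : (D:ℤ) ≤ j0 := by exact_mod_cast h2
  have h3' : (1:ℤ) ≤ S := by exact_mod_cast h3
  have hk0 : (0:ℤ) ≤ k := by positivity
  have h4 : (k:ℤ) * D ≤ (k:ℤ) * j0 := by nlinarith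
  nlinarith [h4, h3']

lemma arith2 (k t j0 D S : ℕ) (hk : 1 ≤ k) (hkt : k ≤ t) (htj : t + 1 ≤ j0)
    (hjD : j0 + 1 ≤ D) (hS : 1 ≤ S)
    (hA : (t+1) * D ≤ (t+1) ^ 2 + ((j0 - (t+1)) * (t+1) + S)) :
    k * D ≤ k ^ 2 + ((j0 - k) * k + (S - 1)) := by
  zify [hS, htj, (by omega : k ≤ j0)] at hA ⊢
  have hmul : ((k:ℤ) + 1) * ((D:ℤ) - j0) ≤ ((t:ℤ) + 1) * ((D:ℤ) - j0) := by
    apply mul_le_mul_of_nonneg_right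
    · omega
    · omega
  have hjD' : (j0:ℤ) + 1 ≤ D := by exact_mod_cast hjD
  nlinarith [hmul, hA, hjD']

/-- If a decreasing sequence `d` of positive integers satisfies
`∑_{i=1}^k d_i ≤ k² + ∑_{i=k+1}^n min{k, d_i}` for all `1 ≤ k ≤ n`, then the
decreasing rearrangement `d''` of the sequence `d'` obtained from `d` by
reducing both `d_1` and `d_n` by one also satisfies these inequalities. -/
theorem stmt_13 (n : ℕ) (d : Fin n → ℕ) (hd : Antitone d) (hpos : ∀ i, 1 ≤ d i)
    (h : ∀ k : ℕ, 1 ≤ k → k ≤ n →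
      ∑ i ∈ univ.filter (fun i : Fin n => (i : ℕ) < k), d i
        ≤ k ^ 2 + ∑ i ∈ univ.filter (fun i : Fin n => k ≤ (i : ℕ)), min k (d i))
    (d'' : Fin n → ℕ) (σ : Equiv.Perm (Fin n)) (hd'' : Antitone d'')
    (hperm : ∀ i, d'' i
      = d (σ i) - (if (σ i : ℕ) = 0 then 1 else 0)
          - (if (σ i : ℕ) = n - 1 then 1 else 0)) :
    ∀ k : ℕ, 1 ≤ k → k ≤ n →
      ∑ i ∈ univ.filter (fun i : Fin n => (i : ℕ) < k), d'' i
        ≤ k ^ 2 + ∑ i ∈ univ.filter (fun i : Fin n => k ≤ (i : ℕ)), min k (d'' i) := by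
  intro k hk1 hkn
  rcases Nat.lt_or_ge n 2 with hn2 | hn2
  · interval_cases n
    · omega
    · have hk : k = 1 := by omega
      subst hk
      have h0 := hperm 0
      have hσ : σ 0 = 0 := Subsingleton.elim _ _
      rw [hσ] at h0
      simp only [Fin.val_zero] at h0
      have h1 := h 1 le_rfl le_rfl
      have he1 : (univ.filter (fun i : Fin 1 => (i : ℕ) < 1)) = univ := by decide
      have he2 : (univ.filter (fun i : Fin 1 => 1 ≤ (i : ℕ))) = ∅ := by decide
      rw [he1, he2] at h1 ⊢
      simp only [Finset.sum_empty, Fin.sum_univ_one] at h1 ⊢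
      omega
  · have hlt : n - 1 < n := by omega
    set Dc : ℕ → ℕ := fun j => d ⟨min j (n-1), by omega⟩ with hDcdef
    have hDcA : Antitone Dc := by
      intro a b hab
      apply hd
      simp only [Fin.mk_le_mk]
      omega
    have hDc_eq : ∀ (j : ℕ) (hj : j < n), Dc j = d ⟨j, hj⟩ := by
      intro j hj
      simp only [hDcdef]
      exact congrArg d (Fin.ext (by simp; omega))
    have hdc : ∀ i : Fin n, Dc (i : ℕ) = d i := by
      intro i; rw [hDc_eq _ i.isLt]
    have hDc1 : ∀ j, 1 ≤ Dc j := fun j => hpos _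
    set t : ℕ := Nat.findGreatest (fun i => Dc i = Dc 0) (n-2) with htdef
    have htle : t ≤ n - 2 := Nat.findGreatest_le (n-2)
    have httop : ∀ i, i ≤ t → Dc i = Dc 0 := by
      intro i hi
      have h1 : Dc i ≤ Dc 0 := hDcA (Nat.zero_le i)
      have h2 : Dc t ≤ Dc i := hDcA hi
      have h3 : Dc t = Dc 0 :=
        Nat.findGreatest_spec (P := fun i => Dc i = Dc 0) (Nat.zero_le _) rfl
      omega
    have htgt : ∀ i, t < i → i ≤ n-2 → Dc i < Dc 0 := by
      intro i h1 h2
      have hne := Nat.findGreatest_is_greatest (P := fun i => Dc i = Dc 0) h1 h2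
      have h3 : Dc i ≤ Dc 0 := hDcA (Nat.zero_le i)
      omega
    -- explicit candidate
    set e : Fin n → ℕ := fun i =>
      d i - (if (i : ℕ) = t then 1 else 0) - (if (i : ℕ) = n-1 then 1 else 0) with hedef
    have heA : Antitone e := by
      intro i j hij
      have hij' : (i : ℕ) ≤ (j : ℕ) := hij
      have hdd : d j ≤ d i := hd hij
      simp only [hedef]
      rcases Nat.lt_trichotomy (j : ℕ) t with hj | hj | hj
      · have hi : (i : ℕ) < t := by omega
        have hint : (i:ℕ) ≠ n-1 := by omega
        have hjnt : (j:ℕ) ≠ n-1 := by omega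
        simp only [if_neg (by omega : (i:ℕ) ≠ t), if_neg (by omega : (j:ℕ) ≠ t),
          if_neg hint, if_neg hjnt]
        omega
      · have hjnt : (j:ℕ) ≠ n-1 := by omega
        have hint : (i:ℕ) ≠ n-1 := by omega
        by_cases hit : (i:ℕ) = t
        · simp only [hit, hj, if_pos rfl, if_neg hint, if_neg hjnt]
          omega
        · simp only [hj, if_pos rfl, if_neg hit, if_neg hint, if_neg hjnt]
          omega
      · by_cases hjn : (j:ℕ) = n-1
        · by_cases hin : (i:ℕ) = n-1
          · have : i = j := Fin.ext (by omega)
            simp [this]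
          · simp only [if_neg (by omega : (j:ℕ) ≠ t), if_pos hjn, if_neg hin]
            by_cases hit : (i:ℕ) = t
            · simp only [if_pos hit]
              omega
            · simp only [if_neg hit]
              omega
        · have hjn2 : (j:ℕ) ≤ n - 2 := by
            have := j.isLt
            omega
          have hlt2 : Dc (j:ℕ) < Dc 0 := htgt _ hj hjn2
          rw [hdc j] at hlt2
          simp only [if_neg (by omega : (j:ℕ) ≠ t), if_neg hjn]
          by_cases hit : (i:ℕ) = t
          · simp only [if_pos hit, if_neg (by omega : (i:ℕ) ≠ n-1)]
            have : Dc (i:ℕ) = Dc 0 := httop _ (by omega)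
            rw [hdc i] at this
            omega
          · by_cases hin : (i:ℕ) = n-1
            · exfalso
              have := j.isLt
              omega
            · simp only [if_neg hit, if_neg hin]
              omega
    -- the modified sequence
    set d1 : Fin n → ℕ := fun i =>
      d i - (if (i:ℕ) = 0 then 1 else 0) - (if (i:ℕ) = n-1 then 1 else 0) with hd1def
    have hd''1 : ∀ i, d'' i = d1 (σ i) := fun i => hperm i
    set G : Fin n → Fin n := fun i =>
      if h : (i:ℕ) < t then ⟨(i:ℕ)+1, by omega⟩
      else if (i:ℕ) = t then ⟨0, by omega⟩ else i with hGdef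
    have hd1' : ∀ x : Fin n, d1 x
        = Dc (x:ℕ) - (if (x:ℕ) = 0 then 1 else 0) - (if (x:ℕ) = n-1 then 1 else 0) := by
      intro x; simp only [hd1def]; rw [hdc]
    have he' : ∀ x : Fin n, e x
        = Dc (x:ℕ) - (if (x:ℕ) = t then 1 else 0) - (if (x:ℕ) = n-1 then 1 else 0) := by
      intro x; simp only [hedef]; rw [hdc]
    have hval : ∀ x : Fin n, ((G x : Fin n) : ℕ)
        = if (x:ℕ) < t then (x:ℕ)+1 else if (x:ℕ) = t then 0 else (x:ℕ) := by
      intro x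
      simp only [hGdef]
      by_cases h1 : (x:ℕ) < t
      · simp [dif_pos h1, if_pos h1]
      · by_cases h2 : (x:ℕ) = t
        · simp [dif_neg h1, if_neg h1, if_pos h2]
        · simp [dif_neg h1, if_neg h1, if_neg h2]
    have hGval : ∀ i, d1 (G i) = e i := by
      intro i
      rw [hd1' (G i), he' i, hval i]
      rcases Nat.lt_trichotomy (i:ℕ) t with hi | hi | hi
      · rw [if_pos hi]
        simp only [if_neg (by omega : (i:ℕ)+1 ≠ 0), if_neg (by omega : (i:ℕ)+1 ≠ n-1),
          if_neg (by omega : (i:ℕ) ≠ t), if_neg (by omega : (i:ℕ) ≠ n-1)]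
        rw [httop _ (by omega : (i:ℕ)+1 ≤ t), httop _ (by omega : (i:ℕ) ≤ t)]
      · rw [if_neg (by omega), if_pos hi]
        simp only [if_pos rfl, if_pos hi, if_neg (by omega : (0:ℕ) ≠ n-1),
          if_neg (by omega : (i:ℕ) ≠ n-1)]
        simp [hi, httop t le_rfl]
      · rw [if_neg (by omega), if_neg (by omega)]
        simp only [if_neg (by omega : (i:ℕ) ≠ 0), if_neg (by omega : (i:ℕ) ≠ t)]
    have hGinj : Function.Injective G := by
      intro a b hab
      have hv := congrArg Fin.val hab
      rw [hval a, hval b] at hv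
      have ha := a.isLt
      have hb := b.isLt
      apply Fin.ext
      split_ifs at hv <;> omega
    have hGbij := Finite.injective_iff_bijective.mp hGinj
    set τ : Equiv.Perm (Fin n) := Equiv.ofBijective G hGbij with hτdef
    have hτ : ∀ x, G (τ.symm x) = x := fun x => τ.apply_symm_apply x
    have hkey : ∀ i, d'' i = e ((σ.trans τ.symm) i) := by
      intro i
      have h1 : e (τ.symm (σ i)) = d1 (G (τ.symm (σ i))) := (hGval _).symm
      rw [hτ] at h1
      rw [hd''1 i, ← h1]
      rfl
    have hfin : ∀ i, d'' i = e i := by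
      have hm1 : Monotone ((OrderDual.toDual ∘ e) ∘ ⇑(σ.trans τ.symm)) := by
        have hfun : (OrderDual.toDual ∘ e) ∘ ⇑(σ.trans τ.symm) = OrderDual.toDual ∘ d'' := by
          funext i
          simp only [Function.comp_apply]
          exact congrArg _ (hkey i).symm
        rw [hfun]
        exact hd''.dual_right
      have hm2 : Monotone ((OrderDual.toDual ∘ e) ∘ ⇑(Equiv.refl (Fin n))) := by
        simpa using heA.dual_right
      have huniq := Tuple.unique_monotone hm1 hm2
      intro i
      have h2 := congrFun huniq i
      simp only [Function.comp_apply, Equiv.refl_apply] at h2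
      rw [hkey i]
      exact congrArg OrderDual.ofDual h2
    -- pass to sequences indexed by ℕ
    set DN : ℕ → ℕ := fun j => if hj : j < n then d ⟨j, hj⟩ else 0 with hDNdef
    set EN : ℕ → ℕ := fun j =>
      DN j - (if j = t then 1 else 0) - (if j = n-1 then 1 else 0) with hENdef
    have hDN_spec : ∀ (j : ℕ) (hj : j < n), DN j = d ⟨j, hj⟩ := by
      intro j hj; simp only [hDNdef, dif_pos hj]
    have hDN_lt : ∀ (j : ℕ), j < n → DN j = Dc j := by
      intro j hj; rw [hDN_spec j hj, hDc_eq j hj]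
    have hEN_spec : ∀ (j : ℕ) (hj : j < n), EN j = d'' ⟨j, hj⟩ := by
      intro j hj
      rw [hfin ⟨j, hj⟩, he' ⟨j, hj⟩]
      simp only [hENdef]
      rw [hDN_lt j hj]
    have hDN1 : ∀ j, j < n → 1 ≤ DN j := by
      intro j hj; rw [hDN_lt j hj]; exact hDc1 j
    rw [bridge1 d'' EN hEN_spec k hkn, bridge2 d'' EN hEN_spec k]
    have HN : ∀ k', 1 ≤ k' → k' ≤ n →
        ∑ j ∈ range k', DN j ≤ k'^2 + ∑ j ∈ Ico k' n, min k' (DN j) := by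
      intro k' h1 h2
      rw [← bridge1 d DN hDN_spec k' h2, ← bridge2 d DN hDN_spec k']
      exact h k' h1 h2
    rcases Nat.lt_or_ge t k with htk | hkt
    · -- Case I : t < k
      rcases Nat.eq_or_lt_of_le hkn with hkn' | hkn'
      · -- k = n
        subst hkn'
        have hmem_t : t ∈ range k := mem_range.mpr (by omega)
        have hmem_n1 : (k-1) ∈ (range k).erase t := by
          rw [mem_erase]
          exact ⟨by omega, mem_range.mpr (by omega)⟩
        have hL : ∑ j ∈ range k, EN j + 2 = ∑ j ∈ range k, DN j := by
          rw [← Finset.add_sum_erase _ EN hmem_t, ← Finset.add_sum_erase _ DN hmem_t,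
              ← Finset.add_sum_erase _ EN hmem_n1, ← Finset.add_sum_erase _ DN hmem_n1]
          have hcong : ∑ j ∈ ((range k).erase t).erase (k-1), EN j
              = ∑ j ∈ ((range k).erase t).erase (k-1), DN j := by
            apply Finset.sum_congr rfl
            intro j hj
            rw [mem_erase, mem_erase] at hj
            simp only [hENdef, if_neg hj.2.1, if_neg hj.1]
            omega
          rw [hcong]
          have h1 : EN t = DN t - 1 := by
            simp only [hENdef]; split_ifs <;> omega
          have h2 : EN (k-1) = DN (k-1) - 1 := by
            simp only [hENdef]; split_ifs <;> omega
          have := hDN1 t (by omega)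
          have := hDN1 (k-1) (by omega)
          omega
        have hIco : Ico k k = ∅ := Ico_self k
        rw [hIco]
        have hHk := HN k (by omega) le_rfl
        rw [hIco] at hHk
        simp only [Finset.sum_empty] at hHk ⊢
        linarith
      · -- t < k ≤ n-1
        have hkn1 : k ≤ n - 1 := by omega
        have hmem_t : t ∈ range k := mem_range.mpr htk
        have hL : ∑ j ∈ range k, EN j + 1 = ∑ j ∈ range k, DN j := by
          rw [← Finset.add_sum_erase _ EN hmem_t, ← Finset.add_sum_erase _ DN hmem_t]
          have hcong : ∑ j ∈ (range k).erase t, EN j = ∑ j ∈ (range k).erase t, DN j := by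
            apply Finset.sum_congr rfl
            intro j hj
            rw [mem_erase, mem_range] at hj
            simp only [hENdef, if_neg hj.1, if_neg (by omega : j ≠ n-1)]
            omega
          rw [hcong]
          have h1 : EN t = DN t - 1 := by
            simp only [hENdef]; split_ifs <;> omega
          have := hDN1 t (by omega)
          omega
        have hmem_n1 : (n-1) ∈ Ico k n := mem_Ico.mpr ⟨by omega, by omega⟩
        have hR : ∑ j ∈ Ico k n, min k (DN j) ≤ ∑ j ∈ Ico k n, min k (EN j) + 1 := by
          rw [← Finset.add_sum_erase _ (fun j => min k (DN j)) hmem_n1,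
              ← Finset.add_sum_erase _ (fun j => min k (EN j)) hmem_n1]
          have hcong : ∑ j ∈ (Ico k n).erase (n-1), min k (EN j)
              = ∑ j ∈ (Ico k n).erase (n-1), min k (DN j) := by
            apply Finset.sum_congr rfl
            intro j hj
            rw [mem_erase, mem_Ico] at hj
            simp only [hENdef, if_neg (by omega : j ≠ t), if_neg hj.1]
            omega
          rw [hcong]
          have h2 : EN (n-1) = DN (n-1) - 1 := by
            simp only [hENdef]; split_ifs <;> omega
          have := hDN1 (n-1) (by omega)
          omega
        have hHk := HN k hk1 hkn
        linarith
    · -- Case II : k ≤ t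
      have hL : ∑ j ∈ range k, EN j = ∑ j ∈ range k, DN j := by
        apply Finset.sum_congr rfl
        intro j hj
        rw [mem_range] at hj
        simp only [hENdef, if_neg (by omega : j ≠ t), if_neg (by omega : j ≠ n-1)]
        omega
      have hLk : ∑ j ∈ range k, DN j = k * Dc 0 := by
        have hc : ∀ j ∈ range k, DN j = Dc 0 := by
          intro j hj
          rw [mem_range] at hj
          rw [hDN_lt j (by omega), httop j (by omega)]
        rw [Finset.sum_congr rfl hc, Finset.sum_const, card_range, smul_eq_mul]
      rcases le_or_gt (Dc 0) k with hD0 | hD0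
      · -- II.a : Dc 0 ≤ k
        rw [hL, hLk]
        calc k * Dc 0 ≤ k * k := Nat.mul_le_mul_left k hD0
          _ = k ^ 2 := (pow_two k).symm
          _ ≤ k ^ 2 + ∑ j ∈ Ico k n, min k (EN j) := Nat.le_add_right _ _
      · rcases Nat.lt_or_ge k (Dc (n-1)) with hDn | hDn
        · -- II.b : k < Dc (n-1)
          have hR : ∑ j ∈ Ico k n, min k (EN j) = ∑ j ∈ Ico k n, min k (DN j) := by
            apply Finset.sum_congr rfl
            intro j hj
            rw [mem_Ico] at hj
            have hjn : j < n := hj.2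
            have hDcj : DN j = Dc j := hDN_lt j hjn
            by_cases h1 : j = t
            · subst h1
              have h3 := httop t le_rfl
              simp only [hENdef]
              split_ifs <;> omega
            · by_cases h2 : j = n-1
              · subst h2
                simp only [hENdef]
                split_ifs <;> omega
              · simp only [hENdef, if_neg h1, if_neg h2]
                omega
          rw [hL, hR]
          exact HN k hk1 hkn
        · -- II.c : Dc (n-1) ≤ k < Dc 0
          have hex : ∃ j, Dc j ≤ k := ⟨n-1, hDn⟩
          set j0 : ℕ := Nat.find hex with hj0def
          have hj0spec : Dc j0 ≤ k := Nat.find_spec hex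
          have hj0min : ∀ j, j < j0 → k < Dc j := fun j hj =>
            Nat.lt_of_not_le (Nat.find_min hex hj)
          have hj0le : j0 ≤ n - 1 := Nat.find_le hDn
          have htj0 : t < j0 := by
            by_contra hcon
            push_neg at hcon
            have h1 := hDcA hcon
            have h2 := httop t le_rfl
            omega
          have hkj0 : k < j0 := by omega
          have hsplit : ∑ j ∈ Ico k n, min k (EN j)
              = ∑ j ∈ Ico k j0, min k (EN j) + ∑ j ∈ Ico j0 n, min k (EN j) :=
            (Finset.sum_Ico_consecutive _ (by omega) (by omega)).symm
          have hpart1 : ∑ j ∈ Ico k j0, min k (EN j) = (j0 - k) * k := by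
            have hc : ∀ j ∈ Ico k j0, min k (EN j) = k := by
              intro j hj
              rw [mem_Ico] at hj
              have hjn : j < n := by omega
              have hDcj : DN j = Dc j := hDN_lt j hjn
              by_cases h1 : j = t
              · subst h1
                have h3 := httop t le_rfl
                simp only [hENdef]
                split_ifs <;> omega
              · have h2 : j ≠ n-1 := by omega
                simp only [hENdef, if_neg h1, if_neg h2]
                have := hj0min j hj.2
                omega
            rw [Finset.sum_congr rfl hc, Finset.sum_const, Nat.card_Ico, smul_eq_mul]
          have hSmem : n - 1 ∈ Ico j0 n := mem_Ico.mpr ⟨hj0le, by omega⟩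
          have hpart2 : ∑ j ∈ Ico j0 n, min k (EN j) + 1 = ∑ j ∈ Ico j0 n, DN j := by
            rw [← Finset.add_sum_erase _ (fun j => min k (EN j)) hSmem,
                ← Finset.add_sum_erase _ DN hSmem]
            have hcong : ∑ j ∈ (Ico j0 n).erase (n-1), min k (EN j)
                = ∑ j ∈ (Ico j0 n).erase (n-1), DN j := by
              apply Finset.sum_congr rfl
              intro j hj
              rw [mem_erase, mem_Ico] at hj
              have hjn : j < n := hj.2.2
              have hDcj : DN j = Dc j := hDN_lt j hjn
              have hDclek : Dc j ≤ k := le_trans (hDcA hj.2.1) hj0spec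
              simp only [hENdef, if_neg (by omega : j ≠ t), if_neg hj.1]
              omega
            rw [hcong]
            have hDcn1 : DN (n-1) = Dc (n-1) := hDN_lt _ (by omega)
            have h2 : min k (EN (n-1)) = DN (n-1) - 1 := by
              simp only [hENdef]; split_ifs <;> omega
            have := hDN1 (n-1) (by omega)
            omega
          have hS1 : 1 ≤ ∑ j ∈ Ico j0 n, DN j :=
            le_trans (hDN1 (n-1) (by omega))
              (Finset.single_le_sum (fun j _ => Nat.zero_le _) hSmem)
          rw [hL, hLk, hsplit, hpart1]
          have hSm1 : ∑ j ∈ Ico j0 n, min k (EN j) = (∑ j ∈ Ico j0 n, DN j) - 1 := by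
            omega
          rcases le_or_gt (Dc 0) j0 with hc1 | hc1
          · rw [hSm1]
            exact arith1 k j0 (Dc 0) _ (by omega) hc1 hS1
          · have hHt := HN (t+1) (by omega) (by omega)
            have hLt : ∑ j ∈ range (t+1), DN j = (t+1) * Dc 0 := by
              have hc : ∀ j ∈ range (t+1), DN j = Dc 0 := by
                intro j hj
                rw [mem_range] at hj
                rw [hDN_lt j (by omega), httop j (by omega)]
              rw [Finset.sum_congr rfl hc, Finset.sum_const, card_range, smul_eq_mul]
            have hsplit2 : ∑ j ∈ Ico (t+1) n, min (t+1) (DN j)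
                = ∑ j ∈ Ico (t+1) j0, min (t+1) (DN j)
                  + ∑ j ∈ Ico j0 n, min (t+1) (DN j) :=
              (Finset.sum_Ico_consecutive _ (by omega) (by omega)).symm
            have hp1 : ∑ j ∈ Ico (t+1) j0, min (t+1) (DN j) ≤ (j0 - (t+1)) * (t+1) := by
              calc ∑ j ∈ Ico (t+1) j0, min (t+1) (DN j)
                  ≤ ∑ _j ∈ Ico (t+1) j0, (t+1) :=
                    Finset.sum_le_sum (fun j _ => Nat.min_le_left _ _)
                _ = (j0 - (t+1)) * (t+1) := by
                    rw [Finset.sum_const, Nat.card_Ico, smul_eq_mul]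
            have hp2 : ∑ j ∈ Ico j0 n, min (t+1) (DN j) = ∑ j ∈ Ico j0 n, DN j := by
              apply Finset.sum_congr rfl
              intro j hj
              rw [mem_Ico] at hj
              have hDcj : DN j = Dc j := hDN_lt j hj.2
              have hDclek : Dc j ≤ k := le_trans (hDcA hj.1) hj0spec
              omega
            rw [hLt, hsplit2, hp2] at hHt
            have hA : (t+1) * Dc 0 ≤ (t+1) ^ 2
                + ((j0 - (t+1)) * (t+1) + ∑ j ∈ Ico j0 n, DN j) := by
              linarith [hp1]
            rw [hSm1]
            exact arith2 k t j0 (Dc 0) _ hk1 hkt (by omega) (by omega) hS1 hA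
end

section
/- If a decreasing sequence d = (d_1, ..., d_n) of positive integers has even sum and satisfies, for each integer k with 1 ≤ k ≤ n, the inequality ∑_{i=1}^k d_i ≤ k(k+1) + ∑_{i=k+1}^n min{k, d_i}, then the decreasing rearrangement of the sequence obtained from d by reducing both d_1 and d_n by one also satisfies these inequalities (with d replaced by the new sequence). -/
open Finset

lemma sum_filter_lt_eq {n : ℕ} (g : Fin n → ℕ) (m : ℕ) (hm : m ≤ n) :
    ∑ i ∈ univ.filter (fun i : Fin n => (i : ℕ) < m), g i
      = ∑ j ∈ Finset.range m, (if h : j < n then g ⟨j, h⟩ else 0) := by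
  refine Finset.sum_nbij (i := fun a => (a : ℕ)) ?_ ?_ ?_ ?_
  · intro a ha; simp only [mem_filter] at ha; simpa using ha.2
  · intro a ha b hb hab; exact Fin.val_injective hab
  · intro b hb
    simp only [coe_range, Set.mem_Iio] at hb
    have hbn : b < n := lt_of_lt_of_le hb hm
    refine ⟨⟨b, hbn⟩, ?_, rfl⟩
    simp [hb]
  · intro a ha; simp [a.isLt]

lemma card_filter_lt {n : ℕ} (m : ℕ) (hm : m ≤ n) :
    (univ.filter (fun i : Fin n => (i : ℕ) < m)).card = m := by
  rw [Finset.card_eq_sum_ones, sum_filter_lt_eq (fun _ : Fin n => 1) m hm,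
    Finset.sum_congr rfl (fun j hj => ?_), Finset.sum_const, smul_eq_mul, mul_one,
    Finset.card_range]
  simp only [mem_range] at hj
  have : j < n := lt_of_lt_of_le hj hm
  simp [this]

lemma sum_shift_le {n : ℕ} (f : Fin n → ℕ) (hf : Antitone f)
    (A : Finset (Fin n)) (t m : ℕ)
    (ht : ∀ i ∈ A, t ≤ (i : ℕ)) (hcard : A.card ≤ m) (hn : t + m ≤ n) :
    ∑ i ∈ A, f i ≤ ∑ j ∈ Finset.range m, (if h : j + t < n then f ⟨j + t, h⟩ else 0) := by
  set G := A.orderEmbOfFin (rfl : A.card = A.card) with hG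
  have key : ∀ jv (hj : jv < A.card), t + jv ≤ ((G ⟨jv, hj⟩ : Fin n) : ℕ) := by
    intro jv
    induction jv with
    | zero =>
      intro hj
      simpa using ht _ (Finset.orderEmbOfFin_mem A rfl ⟨0, hj⟩)
    | succ jv ih =>
      intro hj
      have hj' : jv < A.card := by omega
      have hlt : (G ⟨jv, hj'⟩) < G ⟨jv+1, hj⟩ := by
        apply G.strictMono
        simp [Fin.lt_def]
      have := ih hj'
      have hv : ((G ⟨jv, hj'⟩ : Fin n) : ℕ) < ((G ⟨jv+1, hj⟩ : Fin n) : ℕ) := hlt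
      omega
  have hsum : ∑ i ∈ A, f i = ∑ j : Fin A.card, f (G j) := by
    refine (Finset.sum_nbij (i := fun j => G j) ?_ ?_ ?_ ?_).symm
    · intro j _; exact Finset.orderEmbOfFin_mem A rfl j
    · intro a _ b _ hab; exact G.injective hab
    · intro a ha
      have : a ∈ Set.range G := by
        rw [Finset.range_orderEmbOfFin]; exact ha
      obtain ⟨j, rfl⟩ := this
      exact Set.mem_image_of_mem _ (by simp)
    · intro j _; rfl
  rw [hsum]
  calc ∑ j : Fin A.card, f (G j)
      ≤ ∑ j : Fin A.card, (if h : (j : ℕ) + t < n then f ⟨(j : ℕ) + t, h⟩ else 0) := by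
        apply Finset.sum_le_sum
        intro j _
        have hjn : (j : ℕ) + t < n := by have := j.isLt; omega
        rw [dif_pos hjn]
        apply hf
        have hkey := key (j : ℕ) j.isLt
        rw [Fin.eta] at hkey
        rw [Fin.le_def]
        simpa using by omega
    _ = ∑ j ∈ Finset.range A.card, (if h : j + t < n then f ⟨j + t, h⟩ else 0) :=
        Fin.sum_univ_eq_sum_range (fun x => if h : x + t < n then f ⟨x + t, h⟩ else 0) A.card
    _ ≤ _ := Finset.sum_le_sum_of_subset (Finset.range_subset_range.mpr hcard)

/-- If a decreasing sequence `d` of positive integers has even sum and satisfies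
`∑_{i=1}^k d_i ≤ k(k+1) + ∑_{i=k+1}^n min{k, d_i}` for all `1 ≤ k ≤ n`, then the
decreasing rearrangement `d''` of the sequence `d'` obtained from `d` by
reducing both `d_1` and `d_n` by one also satisfies these inequalities. -/
theorem stmt_14 (n : ℕ) (d : Fin n → ℕ) (hd : Antitone d) (hpos : ∀ i, 1 ≤ d i)
    (heven : Even (∑ i, d i))
    (h : ∀ k : ℕ, 1 ≤ k → k ≤ n →
      ∑ i ∈ univ.filter (fun i : Fin n => (i : ℕ) < k), d i
        ≤ k * (k + 1) + ∑ i ∈ univ.filter (fun i : Fin n => k ≤ (i : ℕ)), min k (d i))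
    (d'' : Fin n → ℕ) (σ : Equiv.Perm (Fin n)) (hd'' : Antitone d'')
    (hperm : ∀ i, d'' i
      = d (σ i) - (if (σ i : ℕ) = 0 then 1 else 0)
          - (if (σ i : ℕ) = n - 1 then 1 else 0)) :
    ∀ k : ℕ, 1 ≤ k → k ≤ n →
      ∑ i ∈ univ.filter (fun i : Fin n => (i : ℕ) < k), d'' i
        ≤ k * (k + 1) + ∑ i ∈ univ.filter (fun i : Fin n => k ≤ (i : ℕ)), min k (d'' i) := by
  intro k hk1 hkn
  have hn1 : 1 ≤ n := le_trans hk1 hkn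
  by_cases hn2 : 2 ≤ n
  swap
  · -- n = 1, k = 1
    have hn : n = 1 := by omega
    have hk : k = 1 := by omega
    subst hk
    have h1 := h 1 le_rfl hkn
    have hle : ∀ i, d'' i ≤ d (σ i) := by
      intro i; rw [hperm i]; have := hpos (σ i); split_ifs <;> omega
    have e1 : ∑ i ∈ univ.filter (fun i : Fin n => (i : ℕ) < 1), d'' i
        ≤ ∑ i ∈ univ.filter (fun i : Fin n => (i : ℕ) < 1), d (σ i) :=
      Finset.sum_le_sum (fun i _ => hle i)
    have hKu : univ.filter (fun i : Fin n => (i : ℕ) < 1) = univ := by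
      ext i
      simp only [mem_filter, mem_univ, true_and, iff_true]
      have := i.isLt; omega
    have hKce : univ.filter (fun i : Fin n => 1 ≤ (i : ℕ)) = ∅ := by
      ext i
      simp only [mem_filter, mem_univ, true_and, Finset.notMem_empty, iff_false]
      have := i.isLt; omega
    rw [hKu] at e1
    rw [hKu, hKce] at h1
    rw [hKu, hKce]
    rw [Finset.sum_empty] at h1 ⊢
    have e2 : ∑ i ∈ univ, d (σ i) = ∑ i ∈ univ, d i := Equiv.sum_comp σ d
    omega
  -- Main case : n ≥ 2
  set Q := k * (k + 1) with hQ
  have hn0 : 0 < n := by omega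
  set j0 : Fin n := ⟨0, hn0⟩ with hj0def
  set j1 : Fin n := ⟨n - 1, by omega⟩ with hj1def
  have hval0 : ((j0 : Fin n) : ℕ) = 0 := rfl
  have hval1 : ((j1 : Fin n) : ℕ) = n - 1 := rfl
  have hj01 : j0 ≠ j1 := by
    intro hc
    have hcc := congrArg Fin.val hc
    rw [hval0, hval1] at hcc
    omega
  set K := univ.filter (fun i : Fin n => (i : ℕ) < k) with hK
  set Kc := univ.filter (fun i : Fin n => k ≤ (i : ℕ)) with hKc
  set ε0 := if d j0 ≤ k then 1 else 0 with hε0def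
  set ε1 := if d j1 ≤ k then 1 else 0 with hε1def
  have hb0 : ε0 ≤ 1 := by rw [hε0def]; split_ifs <;> omega
  have hb1 : ε1 ≤ 1 := by rw [hε1def]; split_ifs <;> omega
  set e : Fin n → ℕ := fun jj =>
    d jj - (if (jj : ℕ) = 0 then 1 else 0) - (if (jj : ℕ) = n - 1 then 1 else 0) with hedef
  have hperm' : ∀ i, d'' i = e (σ i) := hperm
  set w : Fin n → ℕ := fun jj =>
    if (jj : ℕ) = 0 ∨ (jj : ℕ) = n - 1 then 1 + (if d jj ≤ k then 1 else 0) else 0 with hwdef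
  set A := K.image σ with hAdef
  have hcardA : A.card = k := by
    rw [hAdef, Finset.card_image_of_injective _ σ.injective, hK, card_filter_lt k hkn]
  have hKcnot : Kc = univ.filter (fun i : Fin n => ¬ ((i : ℕ) < k)) := by
    rw [hKc]
    ext i
    simp only [mem_filter, mem_univ, true_and]
    omega
  have hsplit'' : ∑ i, min k (d'' i) = ∑ i ∈ K, min k (d'' i) + ∑ i ∈ Kc, min k (d'' i) := by
    rw [hKcnot, hK]
    exact (Finset.sum_filter_add_sum_filter_not univ _ _).symm
  have hUd''perm : ∑ i, min k (d'' i) = ∑ j, min k (e j) := by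
    rw [Finset.sum_congr rfl (fun i _ => by rw [hperm' i])]
    exact Equiv.sum_comp σ (fun j => min k (e j))
  have hvpt : ∀ j : Fin n,
      min k (e j) + ((if j = j0 then ε0 else 0) + (if j = j1 then ε1 else 0))
        = min k (d j) := by
    intro j
    by_cases hj0 : j = j0
    · subst hj0
      rw [if_pos rfl, if_neg hj01]
      simp only [hedef, hε0def]
      have := hpos j0
      split_ifs <;> omega
    · by_cases hj1 : j = j1
      · subst hj1
        rw [if_neg hj0, if_pos rfl]
        simp only [hedef, hε1def]
        have := hpos j1
        split_ifs <;> omega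
      · have h0 : ¬ ((j : ℕ) = 0) := by
          intro hc
          exact hj0 (Fin.val_injective (by omega : (j : ℕ) = (j0 : ℕ)))
        have h1 : ¬ ((j : ℕ) = n - 1) := by
          intro hc
          exact hj1 (Fin.val_injective (by omega : (j : ℕ) = (j1 : ℕ)))
        rw [if_neg hj0, if_neg hj1]
        simp only [hedef]
        rw [if_neg h0, if_neg h1]
        omega
  have hsumv : ∑ j, ((if j = j0 then ε0 else 0) + (if j = j1 then ε1 else 0)) = ε0 + ε1 := by
    rw [Finset.sum_add_distrib, Finset.sum_ite_eq' univ j0 (fun _ => ε0),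
      Finset.sum_ite_eq' univ j1 (fun _ => ε1)]
    simp
  have hUd : ∑ i, min k (d'' i) + (ε0 + ε1) = ∑ j, min k (d j) := by
    rw [hUd''perm, ← hsumv, ← Finset.sum_add_distrib,
      Finset.sum_congr rfl (fun j _ => hvpt j)]
  have hdistr : ∑ i ∈ K, (d'' i + min k (d'' i))
      = ∑ i ∈ K, d'' i + ∑ i ∈ K, min k (d'' i) := Finset.sum_add_distrib
  have hCA : ∑ i ∈ K, (d'' i + min k (d'' i)) + ∑ j ∈ A, w j
      = ∑ j ∈ A, (d j + min k (d j)) := by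
    have h1 : ∑ i ∈ K, (d'' i + min k (d'' i)) = ∑ j ∈ A, (e j + min k (e j)) := by
      rw [hAdef, Finset.sum_image (fun a _ b _ hab => σ.injective hab)]
      exact Finset.sum_congr rfl (fun i _ => by rw [hperm' i])
    rw [h1, ← Finset.sum_add_distrib]
    refine Finset.sum_congr rfl (fun j _ => ?_)
    have := hpos j
    simp only [hedef, hwdef]
    split_ifs <;> omega
  have hfanti : Antitone (fun j : Fin n => d j + min k (d j)) := by
    intro x y hxy
    have := hd hxy
    simp only
    omega
  have hAC : ∑ j ∈ A, (d j + min k (d j)) ≤ ∑ j ∈ K, (d j + min k (d j)) := by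
    have h1 := sum_shift_le _ hfanti A 0 k (fun i _ => Nat.zero_le _) (le_of_eq hcardA)
      (by omega)
    rw [hK, sum_filter_lt_eq (fun j => d j + min k (d j)) k hkn]
    simpa using h1
  have hhyp : ∑ j ∈ K, (d j + min k (d j)) ≤ Q + ∑ j, min k (d j) := by
    have hh := h k hk1 hkn
    rw [← hK, ← hKc, ← hQ] at hh
    have hsplitd : ∑ i, min k (d i) = ∑ i ∈ K, min k (d i) + ∑ i ∈ Kc, min k (d i) := by
      rw [hKcnot, hK]
      exact (Finset.sum_filter_add_sum_filter_not univ _ _).symm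
    have h2 : ∑ j ∈ K, (d j + min k (d j)) = ∑ j ∈ K, d j + ∑ j ∈ K, min k (d j) :=
      Finset.sum_add_distrib
    omega
  by_cases hj0A : j0 ∈ A <;> by_cases hj1A : j1 ∈ A
  · -- both decremented entries among the top k
    have hw01 : w j0 + w j1 ≤ ∑ j ∈ A, w j := by
      have hsub : insert j0 {j1} ⊆ A := by
        intro x hx
        simp only [Finset.mem_insert, Finset.mem_singleton] at hx
        rcases hx with rfl | rfl <;> assumption
      calc w j0 + w j1 = ∑ j ∈ insert j0 {j1}, w j := by
            rw [Finset.sum_insert (by simp [hj01]), Finset.sum_singleton]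
        _ ≤ _ := Finset.sum_le_sum_of_subset hsub
    have hwj0 : w j0 = 1 + ε0 := by
      show (if ((j0 : Fin n) : ℕ) = 0 ∨ ((j0 : Fin n) : ℕ) = n - 1
        then 1 + (if d j0 ≤ k then 1 else 0) else 0) = 1 + ε0
      rw [if_pos (Or.inl hval0), hε0def]
    have hwj1 : w j1 = 1 + ε1 := by
      show (if ((j1 : Fin n) : ℕ) = 0 ∨ ((j1 : Fin n) : ℕ) = n - 1
        then 1 + (if d j1 ≤ k then 1 else 0) else 0) = 1 + ε1
      rw [if_pos (Or.inr hval1), hε1def]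
    omega
  · -- j0 ∈ A, j1 ∉ A
    have hw0 : w j0 ≤ ∑ j ∈ A, w j :=
      Finset.single_le_sum (fun j _ => Nat.zero_le _) hj0A
    have hwj0 : w j0 = 1 + ε0 := by
      show (if ((j0 : Fin n) : ℕ) = 0 ∨ ((j0 : Fin n) : ℕ) = n - 1
        then 1 + (if d j0 ≤ k then 1 else 0) else 0) = 1 + ε0
      rw [if_pos (Or.inl hval0), hε0def]
    omega
  · -- j1 ∈ A, j0 ∉ A
    have hw1 : w j1 ≤ ∑ j ∈ A, w j :=
      Finset.single_le_sum (fun j _ => Nat.zero_le _) hj1A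
    have hwj1 : w j1 = 1 + ε1 := by
      show (if ((j1 : Fin n) : ℕ) = 0 ∨ ((j1 : Fin n) : ℕ) = n - 1
        then 1 + (if d j1 ≤ k then 1 else 0) else 0) = 1 + ε1
      rw [if_pos (Or.inr hval1), hε1def]
    omega
  · -- neither j0 nor j1 in A
    have hA1 : ∀ i ∈ A, 1 ≤ (i : ℕ) := by
      intro i hi
      by_contra hc
      push_neg at hc
      have : i = j0 := Fin.val_injective (by omega : (i : ℕ) = (j0 : ℕ))
      exact hj0A (this ▸ hi)
    have hk2n : k + 2 ≤ n := by
      have hsub : A ⊆ (univ.erase j0).erase j1 := by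
        intro x hx
        exact Finset.mem_erase.mpr ⟨fun hc => hj1A (hc ▸ hx),
          Finset.mem_erase.mpr ⟨fun hc => hj0A (hc ▸ hx), Finset.mem_univ x⟩⟩
      have hcle := Finset.card_le_card hsub
      have c1 : ((univ : Finset (Fin n)).erase j0).card = n - 1 := by
        rw [Finset.card_erase_of_mem (Finset.mem_univ _), Finset.card_univ, Fintype.card_fin]
      have c2 : (((univ : Finset (Fin n)).erase j0).erase j1).card = n - 1 - 1 := by
        rw [Finset.card_erase_of_mem
          (Finset.mem_erase.mpr ⟨Ne.symm hj01, Finset.mem_univ _⟩), c1]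
      rw [hcardA, c2] at hcle
      omega
    have hkn' : k < n := by omega
    have hWA0 : ∑ j ∈ A, w j = 0 := by
      apply Finset.sum_eq_zero
      intro j hj
      simp only [hwdef]
      rw [if_neg]
      rintro (hc | hc)
      · exact hj0A ((Fin.val_injective (by omega : (j : ℕ) = (j0 : ℕ))) ▸ hj)
      · exact hj1A ((Fin.val_injective (by omega : (j : ℕ) = (j1 : ℕ))) ▸ hj)
    have hdj0pos := hpos j0
    by_cases hd0 : d j0 ≤ k
    · -- all entries ≤ k
      have hε0v : ε0 = 1 := by rw [hε0def, if_pos hd0]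
      have halld : ∀ i : Fin n, d i ≤ k := fun i =>
        le_trans (hd (by rw [Fin.le_def, hval0]; exact Nat.zero_le _)) hd0
      have hε1v : ε1 = 1 := by rw [hε1def, if_pos (halld j1)]
      have hshift : ∑ j ∈ A, (d j + min k (d j))
          ≤ ∑ j ∈ Finset.range k,
            (if hj : j + 1 < n then d ⟨j+1, hj⟩ + min k (d ⟨j+1, hj⟩) else 0) :=
        sum_shift_le _ hfanti A 1 k hA1 (le_of_eq hcardA) (by omega)
      have hS1c : ∑ j ∈ A, (d j + min k (d j))
          ≤ 2 * ∑ j ∈ Finset.range k, (if hj : j + 1 < n then d ⟨j+1, hj⟩ else 0) := by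
        rw [Finset.mul_sum]
        refine le_trans hshift (Finset.sum_le_sum ?_)
        intro j hj
        by_cases hjn : j + 1 < n
        · rw [dif_pos hjn, dif_pos hjn]; omega
        · rw [dif_neg hjn, dif_neg hjn]; omega
      have hS1top : ∑ j ∈ Finset.range k, (if hj : j + 1 < n then d ⟨j+1, hj⟩ else 0)
          ≤ k * d j0 := by
        calc ∑ j ∈ Finset.range k, (if hj : j + 1 < n then d ⟨j+1, hj⟩ else 0)
            ≤ ∑ _j ∈ Finset.range k, d j0 := by
              apply Finset.sum_le_sum
              intro j hj
              by_cases hjn : j + 1 < n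
              · rw [dif_pos hjn]
                exact hd (by rw [Fin.le_def, hval0]; exact Nat.zero_le _)
              · rw [dif_neg hjn]; exact Nat.zero_le _
          _ = k * d j0 := by rw [Finset.sum_const, Finset.card_range, smul_eq_mul]
      have hkd0 : k * d j0 ≤ k * k := Nat.mul_le_mul le_rfl hd0
      have huniv : ∑ i, d i = ∑ j ∈ Finset.range n, (if hj : j < n then d ⟨j, hj⟩ else 0) := by
        rw [← sum_filter_lt_eq d n le_rfl]
        apply Finset.sum_congr _ (fun _ _ => rfl)
        rw [Finset.filter_true_of_mem (fun i _ => i.isLt)]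
      have hsplitrange : ∑ j ∈ Finset.range n, (if hj : j < n then d ⟨j, hj⟩ else 0)
          = ∑ j ∈ Finset.range (k+1), (if hj : j < n then d ⟨j, hj⟩ else 0)
            + ∑ j ∈ Finset.Ico (k+1) n, (if hj : j < n then d ⟨j, hj⟩ else 0) := by
        simp only [Finset.range_eq_Ico]
        exact (Finset.sum_Ico_consecutive _ (Nat.zero_le (k+1)) (by omega : k + 1 ≤ n)).symm
      have hfirst : ∑ j ∈ Finset.range (k+1), (if hj : j < n then d ⟨j, hj⟩ else 0)
          = (∑ j ∈ Finset.range k, (if hj : j + 1 < n then d ⟨j+1, hj⟩ else 0))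
            + (if hj : (0:ℕ) < n then d ⟨0, hj⟩ else 0) :=
        Finset.sum_range_succ' _ k
      have hG0 : (if hj : (0:ℕ) < n then d ⟨0, hj⟩ else 0) = d j0 := by
        rw [dif_pos hn0]
      have hR : 1 ≤ ∑ j ∈ Finset.Ico (k+1) n, (if hj : j < n then d ⟨j, hj⟩ else 0) := by
        have hmem : k + 1 ∈ Finset.Ico (k+1) n := by
          simp only [Finset.mem_Ico]; omega
        have h1 : 1 ≤ (if hj : k + 1 < n then d ⟨k+1, hj⟩ else 0) := by
          rw [dif_pos (by omega : k + 1 < n)]; exact hpos _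
        exact le_trans h1 (Finset.single_le_sum
          (f := fun j => if hj : j < n then d ⟨j, hj⟩ else 0)
          (fun j _ => Nat.zero_le _) hmem)
      have hUdd : ∑ j, min k (d j) = ∑ i, d i :=
        Finset.sum_congr rfl (fun i _ => by have := halld i; omega)
      have hQ2 : Q = k * k + k := by rw [hQ]; ring
      omega
    · -- d j0 ≥ k + 1
      have hε0v : ε0 = 0 := by rw [hε0def, if_neg hd0]
      by_cases hd1 : d j1 ≤ k
      swap
      · -- both epsilons vanish
        have hε1v : ε1 = 0 := by rw [hε1def, if_neg hd1]
        omega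
      have hε1v : ε1 = 1 := by rw [hε1def, if_pos hd1]
      have hshift : ∑ j ∈ A, (d j + min k (d j))
          ≤ ∑ j ∈ Finset.range k,
            (if hj : j + 1 < n then d ⟨j+1, hj⟩ + min k (d ⟨j+1, hj⟩) else 0) :=
        sum_shift_le _ hfanti A 1 k hA1 (le_of_eq hcardA) (by omega)
      have hdj0 : d ⟨0, hn0⟩ = d j0 := rfl
      by_cases hak : d ⟨k, hkn'⟩ = d j0
      · -- top k+1 entries all equal d j0 : use hypothesis at k+1
        have hsand : ∀ i : Fin n, (i : ℕ) ≤ k → d i = d j0 := by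
          intro i hi
          have h1 : d i ≤ d j0 := hd (by rw [Fin.le_def, hval0]; exact Nat.zero_le _)
          have h2 : d ⟨k, hkn'⟩ ≤ d i := hd (by rw [Fin.le_def]; exact hi)
          omega
        have hka : k + 1 ≤ d j0 := by omega
        by_contra hcon
        push_neg at hcon
        have hCAub : ∑ j ∈ A, (d j + min k (d j)) ≤ k * (d j0 + k) := by
          refine le_trans hshift ?_
          have hconst : ∀ j ∈ Finset.range k,
              (if hj : j + 1 < n then d ⟨j+1, hj⟩ + min k (d ⟨j+1, hj⟩) else 0)
                = d j0 + k := by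
            intro j hj
            have hjk : j < k := Finset.mem_range.mp hj
            have hjn : j + 1 < n := by omega
            rw [dif_pos hjn, hsand ⟨j+1, hjn⟩ (show j + 1 ≤ k from hjk)]
            have hmin : min k (d j0) = k := by omega
            rw [hmin]
          rw [Finset.sum_congr rfl hconst, Finset.sum_const, Finset.card_range, smul_eq_mul]
        have hmulexp : k * (d j0 + k) = k * d j0 + k * k := by ring
        have hQ2 : Q = k * k + k := by rw [hQ]; ring
        have hUdk : ∑ j, min k (d j) + k ≤ k * d j0 := by omega
        -- hypothesis at k + 1
        have hh2 := h (k+1) (by omega) (by omega)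
        have hlhs : ∑ i ∈ univ.filter (fun i : Fin n => (i : ℕ) < k + 1), d i
            = (k+1) * d j0 := by
          rw [Finset.sum_congr rfl (fun i hi => hsand i (by
              have := (Finset.mem_filter.mp hi).2; omega)),
            Finset.sum_const, card_filter_lt (k+1) (by omega), smul_eq_mul]
        rw [hlhs] at hh2
        have hT2 : ∑ i ∈ univ.filter (fun i : Fin n => k + 1 ≤ (i : ℕ)), min (k+1) (d i)
            ≤ ∑ i ∈ univ.filter (fun i : Fin n => k + 1 ≤ (i : ℕ)), min k (d i)
              + (univ.filter (fun i : Fin n => k + 1 ≤ (i : ℕ) ∧ k + 1 ≤ d i)).card := by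
          calc ∑ i ∈ univ.filter (fun i : Fin n => k + 1 ≤ (i : ℕ)), min (k+1) (d i)
              ≤ ∑ i ∈ univ.filter (fun i : Fin n => k + 1 ≤ (i : ℕ)),
                  (min k (d i) + if k + 1 ≤ d i then 1 else 0) := by
                apply Finset.sum_le_sum
                intro i _
                split_ifs <;> omega
            _ = ∑ i ∈ univ.filter (fun i : Fin n => k + 1 ≤ (i : ℕ)), min k (d i)
                + ∑ i ∈ univ.filter (fun i : Fin n => k + 1 ≤ (i : ℕ)),
                    (if k + 1 ≤ d i then 1 else 0) := Finset.sum_add_distrib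
            _ = _ := by
                congr 1
                rw [← Finset.sum_filter, Finset.filter_filter]
                simp
        have hUdsplit2 : ∑ j, min k (d j)
            = (k+1) * k
              + ∑ i ∈ univ.filter (fun i : Fin n => k + 1 ≤ (i : ℕ)), min k (d i) := by
          have hnot : univ.filter (fun i : Fin n => k + 1 ≤ (i : ℕ))
              = univ.filter (fun i : Fin n => ¬ ((i : ℕ) < k + 1)) := by
            ext i; simp only [mem_filter, mem_univ, true_and]; omega
          rw [hnot,
            ← Finset.sum_filter_add_sum_filter_not univ
              (fun i : Fin n => (i : ℕ) < k + 1) (fun i => min k (d i))]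
          congr 1
          rw [Finset.sum_congr rfl (fun i hi => ?_), Finset.sum_const,
            card_filter_lt (k+1) (by omega), smul_eq_mul]
          have hik : (i : ℕ) ≤ k := by have := (Finset.mem_filter.mp hi).2; omega
          have := hsand i hik
          omega
        have hJsplit : (univ.filter (fun i : Fin n => k + 1 ≤ d i)).card
            = (k+1) + (univ.filter (fun i : Fin n => k + 1 ≤ (i : ℕ) ∧ k + 1 ≤ d i)).card := by
          have hunion : univ.filter (fun i : Fin n => k + 1 ≤ d i)
              = (univ.filter (fun i : Fin n => (i : ℕ) < k + 1))
                ∪ (univ.filter (fun i : Fin n => k + 1 ≤ (i : ℕ) ∧ k + 1 ≤ d i)) := by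
            ext i
            simp only [mem_filter, mem_univ, true_and, Finset.mem_union]
            constructor
            · intro hdi
              by_cases hi : (i : ℕ) < k + 1
              · exact Or.inl hi
              · exact Or.inr ⟨by omega, hdi⟩
            · rintro (hi | hi)
              · have := hsand i (by omega); omega
              · exact hi.2
          have hdisj : Disjoint (univ.filter (fun i : Fin n => (i : ℕ) < k + 1))
              (univ.filter (fun i : Fin n => k + 1 ≤ (i : ℕ) ∧ k + 1 ≤ d i)) := by
            rw [Finset.disjoint_left]
            intro a ha hb
            have h1 := (Finset.mem_filter.mp ha).2
            have h2 := (Finset.mem_filter.mp hb).2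
            omega
          rw [hunion, Finset.card_union_of_disjoint hdisj, card_filter_lt (k+1) (by omega)]
        have hJub : (univ.filter (fun i : Fin n => k + 1 ≤ d i)).card + 1 ≤ n := by
          have hsubJ : univ.filter (fun i : Fin n => k + 1 ≤ d i) ⊆ univ.erase j1 := by
            intro i hi
            refine Finset.mem_erase.mpr ⟨?_, Finset.mem_univ _⟩
            intro hc
            have := (Finset.mem_filter.mp hi).2
            rw [hc] at this
            omega
          have hcle := Finset.card_le_card hsubJ
          rw [Finset.card_erase_of_mem (Finset.mem_univ _), Finset.card_univ,
            Fintype.card_fin] at hcle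
          omega
        have hUdlb : (univ.filter (fun i : Fin n => k + 1 ≤ d i)).card * k + n
            ≤ ∑ j, min k (d j) + (univ.filter (fun i : Fin n => k + 1 ≤ d i)).card := by
          have hsplitJ : ∑ i ∈ univ.filter (fun i : Fin n => k + 1 ≤ d i), min k (d i)
              + ∑ i ∈ univ.filter (fun i : Fin n => ¬ (k + 1 ≤ d i)), min k (d i)
              = ∑ i, min k (d i) :=
            Finset.sum_filter_add_sum_filter_not univ
              (fun i : Fin n => k + 1 ≤ d i) (fun i => min k (d i))
          have hfirstJ : ∑ i ∈ univ.filter (fun i : Fin n => k + 1 ≤ d i), min k (d i)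
              = (univ.filter (fun i : Fin n => k + 1 ≤ d i)).card * k := by
            rw [Finset.sum_congr rfl (fun i hi => ?_), Finset.sum_const, smul_eq_mul]
            have := (Finset.mem_filter.mp hi).2
            omega
          have hsecond : (univ.filter (fun i : Fin n => ¬ (k + 1 ≤ d i))).card
              ≤ ∑ i ∈ univ.filter (fun i : Fin n => ¬ (k + 1 ≤ d i)), min k (d i) := by
            have hns := Finset.card_nsmul_le_sum
              (univ.filter (fun i : Fin n => ¬ (k + 1 ≤ d i)))
              (fun i => min k (d i)) 1 (fun i _ => by
                have := hpos i
                show (1 : ℕ) ≤ min k (d i)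
                omega)
            simpa using hns
          have hcards : (univ.filter (fun i : Fin n => k + 1 ≤ d i)).card
              + (univ.filter (fun i : Fin n => ¬ (k + 1 ≤ d i))).card
              = ((univ : Finset (Fin n))).card :=
            Finset.card_filter_add_card_filter_not
              (s := (univ : Finset (Fin n))) (p := fun i : Fin n => k + 1 ≤ d i)
          rw [Finset.card_univ, Fintype.card_fin] at hcards
          omega
        have e2 : (k+1) * (k + 1 + 1) = k * k + 3 * k + 2 := by ring
        have e1 : (k+1) * d j0 = k * d j0 + d j0 := by ring
        have e3 : (k+1) * k = k * k + k := by ring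
        have ha_le : d j0 ≤ (univ.filter (fun i : Fin n => k + 1 ≤ d i)).card + 1 := by
          omega
        have hmul2 : k * d j0
            ≤ k * ((univ.filter (fun i : Fin n => k + 1 ≤ d i)).card + 1) :=
          Nat.mul_le_mul le_rfl ha_le
        have e4 : k * ((univ.filter (fun i : Fin n => k + 1 ≤ d i)).card + 1)
            = (univ.filter (fun i : Fin n => k + 1 ≤ d i)).card * k + k := by ring
        omega
      · -- d ⟨k⟩ < d j0 : strict drop in top-k sum
        have hdk_le : d ⟨k, hkn'⟩ ≤ d j0 :=
          hd (by rw [Fin.le_def, hval0]; exact Nat.zero_le _)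
        have hKc_eq : ∑ j ∈ K, (d j + min k (d j))
            = ∑ j ∈ Finset.range k,
              (if hj : j < n then d ⟨j, hj⟩ + min k (d ⟨j, hj⟩) else 0) := by
          rw [hK]; exact sum_filter_lt_eq _ k hkn
        have hsucc1 : ∑ j ∈ Finset.range (k+1),
            (if hj : j < n then d ⟨j, hj⟩ + min k (d ⟨j, hj⟩) else 0)
            = ∑ j ∈ Finset.range k,
                (if hj : j < n then d ⟨j, hj⟩ + min k (d ⟨j, hj⟩) else 0)
              + (if hj : k < n then d ⟨k, hj⟩ + min k (d ⟨k, hj⟩) else 0) :=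
          Finset.sum_range_succ _ k
        have hsucc2 : ∑ j ∈ Finset.range (k+1),
            (if hj : j < n then d ⟨j, hj⟩ + min k (d ⟨j, hj⟩) else 0)
            = ∑ j ∈ Finset.range k,
                (if hj : j + 1 < n then d ⟨j+1, hj⟩ + min k (d ⟨j+1, hj⟩) else 0)
              + (if hj : (0:ℕ) < n then d ⟨0, hj⟩ + min k (d ⟨0, hj⟩) else 0) :=
          Finset.sum_range_succ' _ k
        have hFk : (if hj : k < n then d ⟨k, hj⟩ + min k (d ⟨k, hj⟩) else 0) + 1
            ≤ (if hj : (0:ℕ) < n then d ⟨0, hj⟩ + min k (d ⟨0, hj⟩) else 0) := by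
          rw [dif_pos hkn', dif_pos hn0]
          omega
        omega
end
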